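/- arXiv:2203.02599 — 6 statements merged into one kernel-verified Lean document; each statement's English description precedes it below -/
import Mathlib

section
/- For every integrable random variable X on an atomless probability space and every real threshold t, the mean excess value satisfies E[(X − t)_+] = max over α ∈ [0,1] of (1 − α)·(ES_α(X) − t), and the maximum is attained. -/
/-!
Under Lebesgue measure on `(0,1)` the quantile function `β ↦ VaR_β(X)` has the law of `X`, so
`E[(X - t)_+] = ∫_0^1 (VaR_β(X) - t)_+ dβ`, while `(1 - α)(ES_α(X) - t) = ∫_α^1 (VaR_β(X) - t) dβ`.
The latter is at most the former, with equality at `α = ℙ(X ≤ t)`, because `VaR_β(X) ≤ t`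
exactly when `β ≤ ℙ(X ≤ t)`.
-/

open MeasureTheory Set

/-- An atomless measure: every set of nonzero measure can be split nontrivially. -/
def Atomless {Ω : Type*} [MeasurableSpace Ω] (μ : Measure Ω) : Prop :=
  ∀ A : Set Ω, MeasurableSet A → μ A ≠ 0 →
    ∃ B ⊆ A, MeasurableSet B ∧ μ B ≠ 0 ∧ μ B ≠ μ A

/-- Left quantile (lower Value-at-Risk) of `X` at level `β`. -/
noncomputable def VaR {Ω : Type*} [MeasurableSpace Ω] (μ : Measure Ω) (X : Ω → ℝ) (β : ℝ) : ℝ :=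
  sInf {t : ℝ | ENNReal.ofReal β ≤ μ {ω | X ω ≤ t}}

/-- Expected Shortfall of `X` at level `α ∈ [0,1)`; the value at `α = 1` is junk, but it is
only ever used multiplied by `1 - α = 0`, implementing the convention `0 · x = 0`. -/
noncomputable def ES {Ω : Type*} [MeasurableSpace Ω] (μ : Measure Ω) (X : Ω → ℝ) (α : ℝ) : ℝ :=
  (1 - α)⁻¹ * ∫ β in Set.Ioo α 1, VaR μ X β

open Filter ProbabilityTheory Topology

lemma StieltjesFunction.sInf_le_iff_le_apply (F : StieltjesFunction ℝ) {a b β : ℝ}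
    (hbot : Tendsto F atBot (𝓝 a)) (htop : Tendsto F atTop (𝓝 b)) (hβ : β ∈ Ioo a b) (s : ℝ) :
    sInf {x | β ≤ F x} ≤ s ↔ β ≤ F s := by
  set S := {x | β ≤ F x}
  have hup : ∀ x ∈ S, ∀ y, x ≤ y → y ∈ S := fun x hx y hxy => hx.trans (F.mono hxy)
  have hne : S.Nonempty := (htop.eventually (eventually_gt_nhds hβ.2)).exists.imp fun _ => le_of_lt
  have hbdd : BddBelow S := by
    obtain ⟨m, hm⟩ := eventually_atBot.1 (hbot.eventually (eventually_lt_nhds hβ.1))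
    exact ⟨m, fun x hx => le_of_not_ge fun hxm => (hm x hxm).not_ge hx⟩
  -- right-continuity of `F` puts the infimum itself in `S`
  have hmem : sInf S ∈ S := by
    refine ge_of_tendsto ((F.right_continuous _).mono Ioi_subset_Ici_self) ?_
    filter_upwards [self_mem_nhdsWithin] with x hx
    obtain ⟨y, hyS, hyx⟩ := exists_lt_of_csInf_lt hne hx
    exact hup y hyS x hyx.le
  exact ⟨fun h => hup _ hmem s h, fun h => csInf_le hbdd h⟩

lemma volume_Ioo_inter_Iic {a b c : ℝ} (hcb : c ≤ b) :
    volume (Ioo a b ∩ Iic c) = ENNReal.ofReal (c - a) := by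
  refine le_antisymm ?_ ?_
  · calc volume (Ioo a b ∩ Iic c) ≤ volume (Icc a c) :=
          measure_mono fun x hx => ⟨hx.1.1.le, hx.2⟩
      _ = ENNReal.ofReal (c - a) := Real.volume_Icc
  · calc ENNReal.ofReal (c - a) = volume (Ioo a c) := Real.volume_Ioo.symm
      _ ≤ volume (Ioo a b ∩ Iic c) :=
          measure_mono fun x hx => ⟨⟨hx.1, hx.2.trans_le hcb⟩, hx.2.le⟩

section PositivePart

variable {μ : Measure ℝ} {f : ℝ → ℝ}

lemma setIntegral_le_setIntegral_max_zero {s t : Set ℝ} (hf : IntegrableOn f s μ) (hts : t ⊆ s) :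
    ∫ x in t, f x ∂μ ≤ ∫ x in s, max (f x) 0 ∂μ :=
  calc ∫ x in t, f x ∂μ ≤ ∫ x in t, max (f x) 0 ∂μ :=
        setIntegral_mono (hf.mono_set hts) (IntegrableOn.mono_set hf.pos_part hts)
          fun _ => le_max_left _ _
    _ ≤ ∫ x in s, max (f x) 0 ∂μ :=
        setIntegral_mono_set hf.pos_part (ae_of_all _ fun _ => le_max_right _ _) hts.eventuallyLE

lemma setIntegral_Ioo_max_zero_eq {a b c : ℝ} (hac : a ≤ c)
    (hf : ∀ x ∈ Ioo a b, f x ≤ 0 ↔ x ≤ c) :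
    ∫ x in Ioo a b, max (f x) 0 ∂μ = ∫ x in Ioo c b, f x ∂μ := by
  rw [← max_eq_right hac, ← Ioo_inter_Ioi, ← setIntegral_indicator measurableSet_Ioi]
  refine setIntegral_congr_fun measurableSet_Ioo fun x hx => ?_
  by_cases hxc : x ≤ c
  · rw [indicator_of_notMem (s := Ioi c) (not_lt.2 hxc), max_eq_right ((hf x hx).2 hxc)]
  · rw [indicator_of_mem (s := Ioi c) (not_le.1 hxc),
      max_eq_left (not_le.1 (mt (hf x hx).1 hxc)).le]

end PositivePart

lemma one_sub_mul_ES_sub {Ω : Type*} [MeasurableSpace Ω] {μ : Measure Ω} {X : Ω → ℝ} {α : ℝ}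
    (hα : α ≤ 1) (hint : IntegrableOn (VaR μ X) (Ioo α 1)) (t : ℝ) :
    (1 - α) * (ES μ X α - t) = ∫ β in Ioo α 1, (VaR μ X β - t) := by
  rcases hα.eq_or_lt with rfl | hα
  · simp
  rw [integral_sub hint (integrableOn_const (by simp)), setIntegral_const,
    Real.volume_real_Ioo_of_le hα.le, smul_eq_mul, ES]
  field_simp [sub_ne_zero.2 hα.ne']

section VaR

variable {Ω : Type*} [MeasurableSpace Ω] {μ : Measure Ω} [IsProbabilityMeasure μ] {X : Ω → ℝ}

lemma VaR_eq_sInf_cdf (hX : AEMeasurable X μ) (β : ℝ) :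
    VaR μ X β = sInf {s | β ≤ cdf (μ.map X) s} := by
  have := Measure.isProbabilityMeasure_map hX
  rw [VaR]
  congr 1
  ext s
  rw [mem_ofPred_eq, mem_ofPred_eq, ← ENNReal.ofReal_le_ofReal_iff (cdf_nonneg _ s), ofReal_cdf,
    Measure.map_apply_of_aemeasurable hX measurableSet_Iic]
  rfl

lemma VaR_le_iff (hX : AEMeasurable X μ) {β : ℝ} (hβ : β ∈ Ioo 0 1) (s : ℝ) :
    VaR μ X β ≤ s ↔ β ≤ cdf (μ.map X) s := by
  have := Measure.isProbabilityMeasure_map hX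
  rw [VaR_eq_sInf_cdf hX]
  exact (cdf _).sInf_le_iff_le_apply (tendsto_cdf_atBot _) (tendsto_cdf_atTop _) hβ s

lemma monotoneOn_VaR (hX : AEMeasurable X μ) : MonotoneOn (VaR μ X) (Ioo 0 1) :=
  fun _ hβ _ hβ' hle => (VaR_le_iff hX hβ _).2 (hle.trans ((VaR_le_iff hX hβ' _).1 le_rfl))

lemma aemeasurable_VaR (hX : AEMeasurable X μ) :
    AEMeasurable (VaR μ X) (volume.restrict (Ioo 0 1)) :=
  aemeasurable_restrict_of_monotoneOn measurableSet_Ioo (monotoneOn_VaR hX)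

lemma map_restrict_VaR (hX : AEMeasurable X μ) :
    (volume.restrict (Ioo 0 1)).map (VaR μ X) = μ.map X := by
  have := Measure.isProbabilityMeasure_map hX
  have : IsFiniteMeasure (volume.restrict (Ioo (0 : ℝ) 1)) := isFiniteMeasure_restrict.2 (by simp)
  refine Measure.ext_of_Iic _ _ fun s => ?_
  have hpre : VaR μ X ⁻¹' Iic s ∩ Ioo 0 1 = Ioo 0 1 ∩ Iic (cdf (μ.map X) s) := by
    ext β
    simp only [mem_inter_iff, mem_preimage, mem_Iic]
    exact ⟨fun h => ⟨h.2, (VaR_le_iff hX h.2 s).1 h.1⟩,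
      fun h => ⟨(VaR_le_iff hX h.1 s).2 h.2, h.1⟩⟩
  rw [Measure.map_apply_of_aemeasurable (aemeasurable_VaR hX) measurableSet_Iic,
    Measure.restrict_apply' measurableSet_Ioo, hpre, volume_Ioo_inter_Iic (cdf_le_one _ s),
    sub_zero, ofReal_cdf]

lemma integral_comp_eq_setIntegral_VaR (hX : AEMeasurable X μ) {f : ℝ → ℝ} (hf : Measurable f) :
    ∫ ω, f (X ω) ∂μ = ∫ β in Ioo 0 1, f (VaR μ X β) := by
  rw [← integral_map hX hf.aestronglyMeasurable, ← map_restrict_VaR hX,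
    integral_map (aemeasurable_VaR hX) hf.aestronglyMeasurable]

lemma integrableOn_VaR (hX : Integrable X μ) : IntegrableOn (VaR μ X) (Ioo 0 1) := by
  have hid : Integrable id (μ.map X) :=
    (integrable_map_measure aestronglyMeasurable_id hX.aemeasurable).2 hX
  rw [← map_restrict_VaR hX.aemeasurable] at hid
  exact (integrable_map_measure aestronglyMeasurable_id (aemeasurable_VaR hX.aemeasurable)).1 hid

end VaR

theorem reverse_ES_optimization_general {Ω : Type*} [MeasurableSpace Ω] (μ : Measure Ω)
    [IsProbabilityMeasure μ] (X : Ω → ℝ)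
    (hXint : Integrable X μ) (t : ℝ) :
    IsGreatest {y : ℝ | ∃ α ∈ Set.Icc (0 : ℝ) 1, y = (1 - α) * (ES μ X α - t)}
      (∫ ω, max (X ω - t) 0 ∂μ) := by
  have hX := hXint.aemeasurable
  have hQ := integrableOn_VaR hXint
  set A := cdf (μ.map X) t
  have hA : A ∈ Icc 0 1 := ⟨cdf_nonneg _ t, cdf_le_one _ t⟩
  have hsign : ∀ β ∈ Ioo (0 : ℝ) 1, VaR μ X β - t ≤ 0 ↔ β ≤ A :=
    fun β hβ => sub_nonpos.trans (VaR_le_iff hX hβ t)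
  rw [integral_comp_eq_setIntegral_VaR hX (f := fun x => max (x - t) 0) (by fun_prop)]
  refine ⟨⟨A, hA, ?_⟩, ?_⟩
  · rw [one_sub_mul_ES_sub hA.2 (hQ.mono_set (Ioo_subset_Ioo_left hA.1)),
      setIntegral_Ioo_max_zero_eq hA.1 hsign]
  · rintro _ ⟨α, hα, rfl⟩
    have hsub : Ioo α 1 ⊆ Ioo 0 1 := Ioo_subset_Ioo_left hα.1
    rw [one_sub_mul_ES_sub hα.2 (hQ.mono_set hsub)]
    exact setIntegral_le_setIntegral_max_zero (hQ.sub (integrableOn_const (by simp))) hsub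

/-- **Reverse ES optimization formula.** For an integrable random variable `X` on an atomless
probability space and any threshold `t`, the mean excess value `E[(X - t)_+]` is the maximum
over `α ∈ [0,1]` of `(1 - α) (ES_α(X) - t)`, and the maximum is attained. -/
theorem reverse_ES_optimization {Ω : Type*} [MeasurableSpace Ω] (μ : Measure Ω)
    [IsProbabilityMeasure μ] (hμ : Atomless μ) (X : Ω → ℝ)
    (hXmeas : Measurable X) (hXint : Integrable X μ) (t : ℝ) :
    IsGreatest {y : ℝ | ∃ α ∈ Set.Icc (0 : ℝ) 1, y = (1 - α) * (ES μ X α - t)}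
      (∫ ω, max (X ω - t) 0 ∂μ) :=
  reverse_ES_optimization_general μ X hXint t
end

section
/- For every integrable random variable X on an atomless probability space and every α ∈ (0,1), the set of minimizers over t ∈ ℝ of the function t ↦ t + (1/(1−α))·E[(X − t)_+] is exactly the closed interval [VaR⁻_α(X), VaR⁺_α(X)]. -/
open MeasureTheory Set

/-- Left quantile (lower Value-at-Risk) of `X` at level `α`:
`VaR⁻_α(X) = inf {t : ℙ(X ≤ t) ≥ α}`. -/
noncomputable def VaRminus {Ω : Type*} [MeasurableSpace Ω] (μ : Measure Ω) (X : Ω → ℝ)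
    (α : ℝ) : ℝ :=
  sInf {t : ℝ | ENNReal.ofReal α ≤ μ {ω | X ω ≤ t}}

/-- Right quantile (upper Value-at-Risk) of `X` at level `α`:
`VaR⁺_α(X) = inf {t : ℙ(X ≤ t) > α}`. -/
noncomputable def VaRplus {Ω : Type*} [MeasurableSpace Ω] (μ : Measure Ω) (X : Ω → ℝ)
    (α : ℝ) : ℝ :=
  sInf {t : ℝ | ENNReal.ofReal α < μ {ω | X ω ≤ t}}

/-! The objective `f t = t + (1 - α)⁻¹ E[(X - t)₊]` satisfies, by the layer-cake formula,
`f u - f s = ∫ₛᵘ (1 - α)⁻¹ (F t - α) dt` with `F` the distribution function of `X`. So `f` is an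
indefinite integral of a nondecreasing function, and its minimizers are exactly the points where
that function changes sign: the interval between `inf {F ≥ α}` and `inf {F > α}`. -/

open ProbabilityTheory

def IsIndefiniteIntegral (f g : ℝ → ℝ) : Prop :=
  ∀ s u, s ≤ u → f u - f s = ∫ t in Ioc s u, g t

section MonotoneAntiderivative

variable {f g : ℝ → ℝ}

theorem Monotone.setIntegral_Ioc_le (hg : Monotone g) {a b : ℝ} (hab : a ≤ b) :
    ∫ x in Ioc a b, g x ≤ (b - a) * g b := by
  calc ∫ x in Ioc a b, g x ≤ ∫ _ in Ioc a b, g b :=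
        setIntegral_mono_on hg.intervalIntegrable.1 (integrableOn_const measure_Ioc_lt_top.ne)
          measurableSet_Ioc fun _ hx => hg hx.2
    _ = (b - a) * g b := by rw [setIntegral_const, Real.volume_real_Ioc_of_le hab, smul_eq_mul]

theorem Monotone.mul_le_setIntegral_Ioc (hg : Monotone g) {a b : ℝ} (hab : a ≤ b) :
    (b - a) * g a ≤ ∫ x in Ioc a b, g x := by
  calc (b - a) * g a = ∫ _ in Ioc a b, g a := by
        rw [setIntegral_const, Real.volume_real_Ioc_of_le hab, smul_eq_mul]
    _ ≤ ∫ x in Ioc a b, g x :=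
        setIntegral_mono_on (integrableOn_const measure_Ioc_lt_top.ne) hg.intervalIntegrable.1
          measurableSet_Ioc fun _ hx => hg hx.1.le

theorem IsIndefiniteIntegral.nonneg_of_lt_of_le (hf : IsIndefiniteIntegral f g)
    (hg : Monotone g) {s t : ℝ} (hst : s < t) (hmin : f s ≤ f t) : 0 ≤ g t :=
  nonneg_of_mul_nonneg_right
    ((sub_nonneg.2 hmin).trans_eq (hf s t hst.le) |>.trans (hg.setIntegral_Ioc_le hst.le))
    (sub_pos.2 hst)

theorem IsIndefiniteIntegral.nonpos_of_lt_of_le (hf : IsIndefiniteIntegral f g)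
    (hg : Monotone g) {s t : ℝ} (hts : t < s) (hmin : f s ≤ f t) : g t ≤ 0 := by
  have : (s - t) * g t ≤ 0 :=
    (hg.mul_le_setIntegral_Ioc hts.le).trans ((hf t s hts.le).symm.trans_le (sub_nonpos.2 hmin))
  exact nonpos_of_mul_nonpos_right this (sub_pos.2 hts)

theorem IsIndefiniteIntegral.le_of_forall_Ioc_nonneg (hf : IsIndefiniteIntegral f g)
    {s u : ℝ} (hsu : s ≤ u) (hg : ∀ t ∈ Ioc s u, 0 ≤ g t) : f s ≤ f u :=
  sub_nonneg.1 <| (hf s u hsu).symm ▸ setIntegral_nonneg measurableSet_Ioc hg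

theorem IsIndefiniteIntegral.le_of_forall_Ioo_nonpos (hf : IsIndefiniteIntegral f g)
    {s u : ℝ} (hus : u ≤ s) (hg : ∀ t ∈ Ioo u s, g t ≤ 0) : f s ≤ f u := by
  have : ∫ t in Ioc u s, g t ≤ 0 := by
    rw [integral_Ioc_eq_integral_Ioo]
    exact setIntegral_nonpos measurableSet_Ioo hg
  linarith [hf u s hus]

theorem IsIndefiniteIntegral.setOf_forall_le_eq_Icc (hf : IsIndefiniteIntegral f g)
    (hg : Monotone g) (hneg : ∃ m, g m < 0) (hpos : ∃ M, 0 < g M) :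
    {s | ∀ u, f s ≤ f u} = Icc (sInf {t | 0 ≤ g t}) (sInf {t | 0 < g t}) := by
  obtain ⟨m, hm⟩ := hneg
  obtain ⟨M, hM⟩ := hpos
  have hbdd : BddBelow {t | 0 ≤ g t} :=
    ⟨m, fun t ht => le_of_not_gt fun htm => (ht.trans (hg htm.le)).not_gt hm⟩
  have hne : {t | 0 < g t}.Nonempty := ⟨M, hM⟩
  have hsub : {t | 0 < g t} ⊆ {t | 0 ≤ g t} := fun t (ht : 0 < g t) => (ht.le : 0 ≤ g t)
  ext s
  refine ⟨fun hmin => ⟨?_, ?_⟩, fun ⟨hlo, hhi⟩ u => ?_⟩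
  · calc sInf {t | 0 ≤ g t} ≤ sInf (Ioi s) :=
          csInf_le_csInf hbdd nonempty_Ioi fun t hst => hf.nonneg_of_lt_of_le hg hst (hmin t)
      _ = s := csInf_Ioi
  · exact le_csInf hne fun t ht =>
      le_of_not_gt fun hts => (hf.nonpos_of_lt_of_le hg hts (hmin t)).not_gt ht
  · rcases le_total s u with hsu | hus
    · refine hf.le_of_forall_Ioc_nonneg hsu fun t ht => ?_
      obtain ⟨t', ht', ht't⟩ := exists_lt_of_csInf_lt (hne.mono hsub) (hlo.trans_lt ht.1)
      exact ht'.trans (hg ht't.le)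
    · exact hf.le_of_forall_Ioo_nonpos hus fun t ht =>
        not_lt.1 fun hgt => notMem_of_lt_csInf (ht.2.trans_le hhi) (hbdd.mono hsub) hgt

end MonotoneAntiderivative

theorem antitone_measure_Ioi {α : Type*} [Preorder α] [MeasurableSpace α] (ν : Measure α) :
    Antitone fun t => ν (Ioi t) :=
  fun _ _ h => measure_mono (Ioi_subset_Ioi h)

section StopLoss

variable {ν : Measure ℝ}

theorem lintegral_ofReal_posPart_sub (r : ℝ) :
    ∫⁻ x, ENNReal.ofReal (max (x - r) 0) ∂ν = ∫⁻ t in Ioi r, ν (Ioi t) := by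
  rw [lintegral_eq_lintegral_meas_lt (f := fun x => max (x - r) 0) ν
    (ae_of_all _ fun _ => le_max_right _ _) (by fun_prop)]
  have hlevel : ∀ t ∈ Ioi (0 : ℝ), ν {x | t < max (x - r) 0} = ν (Ioi (t + r)) := by
    intro t ht
    congr 1
    ext x
    simp [lt_sub_iff_add_lt, not_lt.2 (mem_Ioi.1 ht).le]
  rw [setLIntegral_congr_fun measurableSet_Ioi hlevel]
  have hshift := (measurePreserving_add_right volume r).setLIntegral_comp_preimage
    (measurableSet_Ioi (a := r)) (antitone_measure_Ioi ν).measurable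
  rwa [preimage_add_const_Ioi, sub_self] at hshift

theorem integral_posPart_sub_sub_integral_posPart_sub [IsFiniteMeasure ν]
    (hν : Integrable (fun x => x) ν) {s u : ℝ} (hsu : s ≤ u) :
    ∫ x, max (x - s) 0 ∂ν - ∫ x, max (x - u) 0 ∂ν = ∫ t in Ioc s u, ν.real (Ioi t) := by
  have hsplit : ∫⁻ x, ENNReal.ofReal (max (x - s) 0) ∂ν
      = (∫⁻ t in Ioc s u, ν (Ioi t)) + ∫⁻ x, ENNReal.ofReal (max (x - u) 0) ∂ν := by
    rw [lintegral_ofReal_posPart_sub, lintegral_ofReal_posPart_sub, ← Ioc_union_Ioi_eq_Ioi hsu,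
      lintegral_union measurableSet_Ioi Ioc_disjoint_Ioi_same]
  have hfin : ∫⁻ x, ENNReal.ofReal (max (x - s) 0) ∂ν ≠ ⊤ :=
    (hν.sub (integrable_const s)).pos_part.lintegral_lt_top.ne
  rw [hsplit, ENNReal.add_ne_top] at hfin
  have htoReal : ∀ r, ∫ x, max (x - r) 0 ∂ν = (∫⁻ x, ENNReal.ofReal (max (x - r) 0) ∂ν).toReal :=
    fun _ => integral_eq_lintegral_of_nonneg_ae (ae_of_all _ fun _ => le_max_right _ _)
      (by fun_prop)
  simp only [htoReal, measureReal_def]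
  rw [hsplit, ENNReal.toReal_add hfin.1 hfin.2, add_sub_cancel_right,
    integral_toReal (antitone_measure_Ioi ν).measurable.aemeasurable
      (ae_of_all _ fun _ => measure_lt_top ν _)]

theorem measureReal_Ioi_eq_one_sub_cdf [IsProbabilityMeasure ν] (t : ℝ) :
    ν.real (Ioi t) = 1 - cdf ν t := by
  rw [cdf_eq_real, ← compl_Iic, probReal_compl_eq_one_sub measurableSet_Iic]

end StopLoss

/-- The Rockafellar–Uryasev function, whose minimum value is the expected shortfall at level `α`. -/
noncomputable def esObjective (ν : Measure ℝ) (α t : ℝ) : ℝ :=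
  t + (1 - α)⁻¹ * ∫ x, max (x - t) 0 ∂ν

theorem esObjective_sub_esObjective {ν : Measure ℝ} [IsProbabilityMeasure ν]
    (hν : Integrable (fun x => x) ν) {α : ℝ} (hα : α ≠ 1) {s u : ℝ} (hsu : s ≤ u) :
    esObjective ν α u - esObjective ν α s = ∫ t in Ioc s u, (1 - α)⁻¹ * (cdf ν t - α) := by
  have hc : (1 - α)⁻¹ * (1 - α) = 1 := inv_mul_cancel₀ (sub_ne_zero.2 hα.symm)
  have hF : IntegrableOn (cdf ν) (Ioc s u) := (monotone_cdf ν).intervalIntegrable.1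
  have hconst (a : ℝ) : IntegrableOn (fun _ => a) (Ioc s u) :=
    integrableOn_const measure_Ioc_lt_top.ne
  have hdiff := integral_posPart_sub_sub_integral_posPart_sub hν hsu
  simp_rw [measureReal_Ioi_eq_one_sub_cdf] at hdiff
  rw [integral_sub (hconst 1) hF, setIntegral_const, Real.volume_real_Ioc_of_le hsu] at hdiff
  rw [integral_const_mul, integral_sub hF (hconst α), setIntegral_const,
    Real.volume_real_Ioc_of_le hsu]
  unfold esObjective
  simp only [smul_eq_mul] at hdiff ⊢
  linear_combination (-(1 - α)⁻¹) * hdiff + (s - u) * hc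

theorem setOf_forall_esObjective_le {ν : Measure ℝ} [IsProbabilityMeasure ν]
    (hν : Integrable (fun x => x) ν) {α : ℝ} (hα : α ∈ Ioo (0 : ℝ) 1) :
    {s | ∀ u, esObjective ν α s ≤ esObjective ν α u}
      = Icc (sInf {t | α ≤ cdf ν t}) (sInf {t | α < cdf ν t}) := by
  have hc : 0 < (1 - α)⁻¹ := inv_pos.2 (sub_pos.2 hα.2)
  have hg : Monotone fun t => (1 - α)⁻¹ * (cdf ν t - α) := fun a b h =>
    mul_le_mul_of_nonneg_left (sub_le_sub_right (monotone_cdf ν h) α) hc.le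
  have hneg : ∃ m, (1 - α)⁻¹ * (cdf ν m - α) < 0 :=
    (((tendsto_cdf_atBot ν).eventually_lt_const hα.1).exists).imp fun _ hm =>
      mul_neg_of_pos_of_neg hc (sub_neg.2 hm)
  have hpos : ∃ M, 0 < (1 - α)⁻¹ * (cdf ν M - α) :=
    (((tendsto_cdf_atTop ν).eventually_const_lt hα.2).exists).imp fun _ hM =>
      mul_pos hc (sub_pos.2 hM)
  rw [IsIndefiniteIntegral.setOf_forall_le_eq_Icc
    (fun s u hsu => esObjective_sub_esObjective hν hα.2.ne hsu) hg hneg hpos]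
  simp only [mul_nonneg_iff_of_pos_left hc, mul_pos_iff_of_pos_left hc, sub_nonneg, sub_pos]

theorem VaRminus_eq_sInf_cdf {Ω : Type*} [MeasurableSpace Ω] {μ : Measure Ω}
    [IsProbabilityMeasure μ] {X : Ω → ℝ} (hX : AEMeasurable X μ) (α : ℝ) :
    VaRminus μ X α = sInf {t | α ≤ cdf (μ.map X) t} := by
  have := Measure.isProbabilityMeasure_map hX
  simp_rw [VaRminus, ← ENNReal.ofReal_le_ofReal_iff (cdf_nonneg _ _), ofReal_cdf,
    Measure.map_apply_of_aemeasurable hX measurableSet_Iic]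
  rfl

theorem VaRplus_eq_sInf_cdf {Ω : Type*} [MeasurableSpace Ω] {μ : Measure Ω}
    [IsProbabilityMeasure μ] {X : Ω → ℝ} (hX : AEMeasurable X μ) {α : ℝ} (hα : 0 ≤ α) :
    VaRplus μ X α = sInf {t | α < cdf (μ.map X) t} := by
  have := Measure.isProbabilityMeasure_map hX
  simp_rw [VaRplus, ← ENNReal.ofReal_lt_ofReal_iff_of_nonneg hα, ofReal_cdf,
    Measure.map_apply_of_aemeasurable hX measurableSet_Iic]
  rfl

theorem ES_optimization_minimizers_general {Ω : Type*} [MeasurableSpace Ω] (μ : Measure Ω)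
    [IsProbabilityMeasure μ] (X : Ω → ℝ)
    (hXint : Integrable X μ)
    (α : ℝ) (hα : α ∈ Set.Ioo (0 : ℝ) 1) :
    {s : ℝ | ∀ u : ℝ,
        s + (1 - α)⁻¹ * ∫ ω, max (X ω - s) 0 ∂μ ≤ u + (1 - α)⁻¹ * ∫ ω, max (X ω - u) 0 ∂μ}
      = Set.Icc (VaRminus μ X α) (VaRplus μ X α) := by
  have hX := hXint.aemeasurable
  have := Measure.isProbabilityMeasure_map hX
  have hν : Integrable (fun x => x) (μ.map X) :=
    (integrable_map_measure (g := fun x => x) (by fun_prop) hX).2 hXint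
  have hmap (t : ℝ) : ∫ ω, max (X ω - t) 0 ∂μ = ∫ x, max (x - t) 0 ∂(μ.map X) :=
    (integral_map hX (f := fun x => max (x - t) 0) (by fun_prop)).symm
  simp_rw [hmap, VaRminus_eq_sInf_cdf hX, VaRplus_eq_sInf_cdf hX hα.1.le]
  exact setOf_forall_esObjective_le hν hα

/-- The set of minimizers over `t ∈ ℝ` of `t ↦ t + (1/(1-α)) E[(X - t)_+]` is exactly the
closed interval `[VaR⁻_α(X), VaR⁺_α(X)]`. -/
theorem ES_optimization_minimizers {Ω : Type*} [MeasurableSpace Ω] (μ : Measure Ω)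
    [IsProbabilityMeasure μ] (hμ : Atomless μ) (X : Ω → ℝ)
    (hXmeas : Measurable X) (hXint : Integrable X μ)
    (α : ℝ) (hα : α ∈ Set.Ioo (0 : ℝ) 1) :
    {s : ℝ | ∀ u : ℝ,
        s + (1 - α)⁻¹ * ∫ ω, max (X ω - s) 0 ∂μ ≤ u + (1 - α)⁻¹ * ∫ ω, max (X ω - u) 0 ∂μ}
      = Set.Icc (VaRminus μ X α) (VaRplus μ X α) :=
  ES_optimization_minimizers_general μ X hXint α hα
end

section
/- For p > 1, m, t ∈ ℝ and v ≥ 0, the supremum of E[(X − t)_+] over all integrable random variables X on an atomless probability space with E[X] = m and E[|X − m|^p] ≤ v^p equals max over α ∈ [0,1] of { (1 − α)(m − t) + v·((1 − α)^{1−p} + α^{1−p})^{−1/p} }, with the conventions 1/0 = ∞ and 1/∞ = 0. -/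
/-
Put `g = X - m`, `A = {X > t}` and `w = ℙ(A)`. Then `E[(X - t)₊] = E[g; A] + w (m - t)`, and
`E[g; A] = -E[g; Aᶜ]` because `E[g] = 0`. Hölder's inequality on `A` and on `Aᶜ` gives
`E[g; A]^p w^(1-p) ≤ E[|g|^p; A]` and `E[g; A]^p (1-w)^(1-p) ≤ E[|g|^p; Aᶜ]`; adding the two,
`E[g; A] ≤ v (w^(1-p) + (1-w)^(1-p))^(-1/p)`, which is the bound at `α = 1 - w`.
Conversely, for `0 < α < 1` the bound is attained by the two-point law that jumps up by
`s / (1 - α)` with probability `1 - α` and down by `s / α` otherwise, where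
`s = v ((1-α)^(1-p) + α^(1-p))^(-1/p)`; an event of probability `1 - α` exists by Sierpiński's
theorem on atomless measures. At `α ∈ {0, 1}` the constant `X = m` does at least as well. The bound
is continuous in `α`, so its maximum over `[0, 1]` is the supremum.
-/

open MeasureTheory Set

/-- The set of mean excess values `E[(X - t)_+]` achieved by integrable random variables `X`
with mean `m` and `p`-th centralized absolute moment at most `v^p` (the moment uncertainty
set `L^p(m, v)`). -/
def meanExcessMomentSet {Ω : Type*} [MeasurableSpace Ω] (μ : Measure Ω)
    (p m v t : ℝ) : Set ℝ :=
  {y : ℝ | ∃ X : Ω → ℝ, Measurable X ∧ Integrable X μ ∧ (∫ ω, X ω ∂μ) = m ∧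
    Integrable (fun ω => |X ω - m| ^ p) μ ∧ (∫ ω, |X ω - m| ^ p ∂μ) ≤ v ^ p ∧
    y = ∫ ω, max (X ω - t) 0 ∂μ}

open scoped ENNReal

noncomputable def momentFactor (p α : ℝ) : ℝ :=
  ((ENNReal.ofReal (1 - α) ^ (1 - p) + ENNReal.ofReal α ^ (1 - p)) ^ (-1 / p)).toReal

noncomputable def meanExcessBound (p m v t α : ℝ) : ℝ :=
  (1 - α) * (m - t) + v * momentFactor p α

section MomentFactor

variable {p : ℝ}

theorem momentFactor_of_mem_Ioo {α : ℝ} (hα : α ∈ Ioo 0 1) :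
    momentFactor p α = ((1 - α) ^ (1 - p) + α ^ (1 - p)) ^ (-1 / p) := by
  have h₀ : 0 < α := hα.1
  have h₁ : 0 < 1 - α := sub_pos.mpr hα.2
  rw [momentFactor, ENNReal.ofReal_rpow_of_pos h₁, ENNReal.ofReal_rpow_of_pos h₀,
    ← ENNReal.ofReal_add (by positivity) (by positivity),
    ENNReal.ofReal_rpow_of_pos (by positivity), ENNReal.toReal_ofReal (by positivity)]

theorem momentFactor_one_sub (α : ℝ) : momentFactor p (1 - α) = momentFactor p α := by
  rw [momentFactor, sub_sub_cancel, add_comm, momentFactor]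

theorem momentFactor_zero (hp : 1 < p) : momentFactor p 0 = 0 := by
  rw [momentFactor, ENNReal.ofReal_zero, ENNReal.zero_rpow_of_neg (by linarith), add_top,
    ENNReal.top_rpow_of_neg (div_neg_of_neg_of_pos (by norm_num) (by linarith)),
    ENNReal.toReal_zero]

theorem momentFactor_one (hp : 1 < p) : momentFactor p 1 = 0 := by
  rw [← momentFactor_one_sub, sub_self, momentFactor_zero hp]

theorem continuous_momentFactor (hp : 1 < p) : Continuous (momentFactor p) := by
  have hsum_ne_zero (α : ℝ) :
      ENNReal.ofReal (1 - α) ^ (1 - p) + ENNReal.ofReal α ^ (1 - p) ≠ 0 := fun h =>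
    ENNReal.ofReal_ne_top <| ((ENNReal.rpow_eq_zero_iff.mp (add_eq_zero.mp h).1).resolve_left
      fun h' => by linarith [h'.2]).1
  have hne_top (α : ℝ) :
      (ENNReal.ofReal (1 - α) ^ (1 - p) + ENNReal.ofReal α ^ (1 - p)) ^ (-1 / p) ≠ ∞ := by
    rw [Ne, ENNReal.rpow_eq_top_iff]
    rintro (⟨h, -⟩ | ⟨-, h⟩)
    · exact hsum_ne_zero α h
    · exact (div_neg_of_neg_of_pos neg_one_lt_zero (by linarith)).not_gt h
  have hcont : Continuous fun α : ℝ =>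
      (ENNReal.ofReal (1 - α) ^ (1 - p) + ENNReal.ofReal α ^ (1 - p)) ^ (-1 / p) :=
    ENNReal.continuous_rpow_const.comp <|
      (ENNReal.continuous_rpow_const.comp (ENNReal.continuous_ofReal.comp
        (continuous_const.sub continuous_id))).add
      (ENNReal.continuous_rpow_const.comp ENNReal.continuous_ofReal)
  exact continuous_iff_continuousAt.mpr fun α =>
    (ENNReal.tendsto_toReal (hne_top α)).comp hcont.continuousAt

theorem continuous_meanExcessBound (hp : 1 < p) (m v t : ℝ) :
    Continuous (meanExcessBound p m v t) :=
  ((continuous_const.sub continuous_id).mul continuous_const).add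
    (continuous_const.mul (continuous_momentFactor hp))

end MomentFactor

theorem rpow_mul_rpow_one_sub_le_of_le_mul {p q I c x : ℝ} (hpq : p.HolderConjugate q)
    (hI : 0 ≤ I) (hc : 0 ≤ c) (hx : 0 < x) (h : I ≤ c ^ (1 / p) * x ^ (1 / q)) :
    I ^ p * x ^ (1 - p) ≤ c := by
  calc I ^ p * x ^ (1 - p) ≤ (c ^ (1 / p) * x ^ (1 / q)) ^ p * x ^ (1 - p) := by
        gcongr; exact hpq.nonneg
    _ = c := by
      rw [Real.mul_rpow (by positivity) (by positivity), ← Real.rpow_mul hc,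
        ← Real.rpow_mul hx.le, one_div_mul_cancel hpq.ne_zero, Real.rpow_one, one_div_mul_eq_div,
        hpq.div_conj_eq_sub_one, mul_assoc, ← Real.rpow_add hx, sub_add_sub_cancel', sub_self,
        Real.rpow_zero, mul_one]

theorem le_mul_momentFactor_one_sub {p q v w a b I : ℝ} (hpq : p.HolderConjugate q)
    (hv : 0 ≤ v) (hw : w ∈ Icc 0 1) (ha : 0 ≤ a) (hb : 0 ≤ b) (hab : a + b ≤ v ^ p)
    (hIa : I ≤ a ^ (1 / p) * w ^ (1 / q)) (hIb : I ≤ b ^ (1 / p) * (1 - w) ^ (1 / q)) :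
    I ≤ v * momentFactor p (1 - w) := by
  rcases le_or_gt I 0 with hI | hI
  · exact hI.trans (mul_nonneg hv ENNReal.toReal_nonneg)
  have hq : 1 / q ≠ 0 := hpq.symm.one_div_ne_zero
  have hw₀ : 0 < w := hw.1.lt_of_ne fun h => by
    rw [← h, Real.zero_rpow hq, mul_zero] at hIa
    exact hIa.not_gt hI
  have hw₁ : 0 < 1 - w := (sub_nonneg.mpr hw.2).lt_of_ne fun h => by
    rw [← h, Real.zero_rpow hq, mul_zero] at hIb
    exact hIb.not_gt hI
  rw [momentFactor_of_mem_Ioo ⟨hw₁, sub_lt_self 1 hw₀⟩, sub_sub_cancel]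
  set S := w ^ (1 - p) + (1 - w) ^ (1 - p)
  have hS : 0 < S := by positivity
  have hIS : I ^ p * S ≤ v ^ p := by
    calc I ^ p * S = I ^ p * w ^ (1 - p) + I ^ p * (1 - w) ^ (1 - p) := mul_add _ _ _
      _ ≤ a + b := add_le_add (rpow_mul_rpow_one_sub_le_of_le_mul hpq hI.le ha hw₀ hIa)
          (rpow_mul_rpow_one_sub_le_of_le_mul hpq hI.le hb hw₁ hIb)
      _ ≤ v ^ p := hab
  rw [← Real.rpow_le_rpow_iff hI.le (by positivity) hpq.pos, Real.mul_rpow hv (by positivity),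
    ← Real.rpow_mul hS.le, div_mul_cancel₀ _ hpq.ne_zero, Real.rpow_neg_one,
    le_mul_inv_iff₀ hS]
  exact hIS

section Measure

variable {Ω : Type*} [MeasurableSpace Ω] {μ : Measure Ω}

theorem Atomless.exists_subset_measure_le_half (hμ : Atomless μ) {A : Set Ω}
    (hA : MeasurableSet A) (hA₀ : μ A ≠ 0) (hA_fin : μ A ≠ ∞) :
    ∃ B ⊆ A, MeasurableSet B ∧ μ B ≠ 0 ∧ μ B ≤ μ A / 2 := by
  obtain ⟨B, hBA, hB, hB₀, hB_ne⟩ := hμ A hA hA₀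
  by_cases hB_le : μ B ≤ μ A / 2
  · exact ⟨B, hBA, hB, hB₀, hB_le⟩
  have hdiff : μ (A \ B) = μ A - μ B :=
    measure_sdiff hBA hB.nullMeasurableSet (ne_top_of_le_ne_top hA_fin (measure_mono hBA))
  refine ⟨A \ B, sdiff_subset, hA.diff hB, ?_, ?_⟩
  · rw [hdiff]
    exact (tsub_pos_of_lt ((measure_mono hBA).lt_of_ne hB_ne)).ne'
  · rw [hdiff, tsub_le_iff_left]
    calc μ A = μ A / 2 + μ A / 2 := (ENNReal.add_halves _).symm
      _ ≤ μ B + μ A / 2 := by gcongr; exact (not_le.mp hB_le).le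

theorem Atomless.exists_subset_measure_pos_le (hμ : Atomless μ) {A : Set Ω}
    (hA : MeasurableSet A) (hA₀ : μ A ≠ 0) (hA_fin : μ A ≠ ∞) {ε : ℝ≥0∞} (hε : ε ≠ 0) :
    ∃ B ⊆ A, MeasurableSet B ∧ μ B ≠ 0 ∧ μ B ≤ ε := by
  have halving (n : ℕ) : ∃ B ⊆ A, MeasurableSet B ∧ μ B ≠ 0 ∧ μ B ≤ μ A * 2⁻¹ ^ n := by
    induction n with
    | zero => exact ⟨A, subset_rfl, hA, hA₀, by simp⟩
    | succ n ih =>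
      obtain ⟨B, hBA, hB, hB₀, hB_le⟩ := ih
      obtain ⟨C, hCB, hC, hC₀, hC_le⟩ := hμ.exists_subset_measure_le_half hB hB₀
        (ne_top_of_le_ne_top hA_fin (measure_mono hBA))
      refine ⟨C, hCB.trans hBA, hC, hC₀, ?_⟩
      calc μ C ≤ μ B * 2⁻¹ := by rwa [← div_eq_mul_inv]
        _ ≤ μ A * 2⁻¹ ^ (n + 1) := by rw [pow_succ, ← mul_assoc]; gcongr
  have htendsto : Filter.Tendsto (fun n : ℕ => μ A * 2⁻¹ ^ n) Filter.atTop (nhds 0) := by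
    simpa using ENNReal.Tendsto.const_mul
      (ENNReal.tendsto_pow_atTop_nhds_zero_iff.mpr (ENNReal.inv_lt_one.mpr ENNReal.one_lt_two))
      (Or.inr hA_fin)
  obtain ⟨n, hn⟩ := (htendsto.eventually (gt_mem_nhds (pos_iff_ne_zero.mpr hε))).exists
  obtain ⟨B, hBA, hB, hB₀, hB_le⟩ := halving n
  exact ⟨B, hBA, hB, hB₀, hB_le.trans hn.le⟩

theorem exists_superset_measure_le_add_half [IsFiniteMeasure μ] {r : ℝ≥0∞} {B : Set Ω}
    (hB : MeasurableSet B) (hBr : μ B ≤ r) :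
    ∃ B' ⊇ B, MeasurableSet B' ∧ μ B' ≤ r ∧
      ∀ C, MeasurableSet C → C ⊆ Bᶜ → μ B + μ C ≤ r → μ B + μ C / 2 ≤ μ B' := by
  set δ := ⨆ C : {C : Set Ω // MeasurableSet C ∧ C ⊆ Bᶜ ∧ μ B + μ C ≤ r}, μ C.1
  have le_δ : ∀ C, MeasurableSet C → C ⊆ Bᶜ → μ B + μ C ≤ r → μ C ≤ δ :=
    fun C hC hCB hCr => le_iSup (fun C : {C : Set Ω // _} => μ C.1) ⟨C, hC, hCB, hCr⟩
  rcases eq_or_ne δ 0 with hδ | hδ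
  · refine ⟨B, subset_rfl, hB, hBr, fun C hC hCB hCr => ?_⟩
    simp [nonpos_iff_eq_zero.mp (hδ ▸ le_δ C hC hCB hCr)]
  have hδ_fin : δ ≠ ∞ :=
    ne_top_of_le_ne_top (measure_ne_top μ univ) (iSup_le fun C => measure_mono (subset_univ _))
  obtain ⟨⟨C₀, hC₀, hC₀B, hC₀r⟩, hC₀_gt⟩ := lt_iSup_iff.mp (ENNReal.half_lt_self hδ hδ_fin)
  refine ⟨B ∪ C₀, subset_union_left, hB.union hC₀, (measure_union_le _ _).trans hC₀r,
    fun C hC hCB hCr => ?_⟩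
  rw [measure_union (subset_compl_iff_disjoint_left.mp hC₀B) hC₀]
  gcongr
  exact (ENNReal.div_le_div_right (le_δ C hC hCB hCr) 2).trans hC₀_gt.le

theorem Atomless.exists_measurableSet_measure_eq [IsFiniteMeasure μ] (hμ : Atomless μ)
    {r : ℝ≥0∞} (hr : r ≤ μ univ) :
    ∃ A, MeasurableSet A ∧ μ A = r := by
  choose! next subset_next measurableSet_next next_le le_next using
    fun B (hB : MeasurableSet B) (hBr : μ B ≤ r) => exists_superset_measure_le_add_half hB hBr
  set B : ℕ → Set Ω := fun n => next^[n] ∅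
  have hB_succ (n : ℕ) : B (n + 1) = next (B n) := Function.iterate_succ_apply' _ _ _
  have hB (n : ℕ) : MeasurableSet (B n) ∧ μ (B n) ≤ r := by
    induction n with
    | zero => simp [B]
    | succ n ih => exact hB_succ n ▸ ⟨measurableSet_next _ ih.1 ih.2, next_le _ ih.1 ih.2⟩
  have hB_mono : Monotone B :=
    monotone_nat_of_le_succ fun n => hB_succ n ▸ subset_next _ (hB n).1 (hB n).2
  set U := ⋃ n, B n
  have hU : MeasurableSet U := .iUnion fun n => (hB n).1
  have hU_le : μ U ≤ r := by
    rw [hB_mono.measure_iUnion]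
    exact iSup_le fun n => (hB n).2
  refine ⟨U, hU, hU_le.antisymm (not_lt.mp fun hlt => ?_)⟩
  -- A set of positive measure fitting in the gap `r - μ U` would have been half-absorbed at every
  -- step of the greedy construction, forcing `μ (B n)` to grow without bound.
  have hUc : μ Uᶜ ≠ 0 := by
    rw [measure_compl hU (measure_ne_top μ U)]
    exact (tsub_pos_of_lt (hlt.trans_le hr)).ne'
  obtain ⟨C, hCU, hC, hC₀, hC_le⟩ := hμ.exists_subset_measure_pos_le hU.compl hUc
    (measure_ne_top μ _) (tsub_pos_of_lt hlt).ne'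
  have hstep (n : ℕ) : μ (B n) + μ C / 2 ≤ μ (B (n + 1)) := by
    rw [hB_succ]
    refine le_next _ (hB n).1 (hB n).2 C hC
      (hCU.trans (compl_subset_compl.mpr (subset_iUnion B n))) ?_
    calc μ (B n) + μ C ≤ μ U + (r - μ U) :=
          add_le_add (measure_mono (subset_iUnion B n)) hC_le
      _ = r := add_tsub_cancel_of_le hU_le
  have hgrow (n : ℕ) : n * (μ C / 2) ≤ r := by
    refine le_trans ?_ (hB n).2
    induction n with
    | zero => simp
    | succ n ih =>
      rw [Nat.cast_succ, add_one_mul]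
      exact (add_le_add ih le_rfl).trans (hstep n)
  obtain ⟨n, hn⟩ := ENNReal.exists_nat_mul_gt
    (ENNReal.div_ne_zero.mpr ⟨hC₀, ENNReal.ofNat_ne_top (n := 2)⟩)
    (ne_top_of_le_ne_top (measure_ne_top μ univ) hr)
  exact (hgrow n).not_gt hn

theorem setIntegral_abs_le_of_memLp [IsFiniteMeasure μ] {p q : ℝ} (hpq : p.HolderConjugate q)
    {g : Ω → ℝ} (hg : MemLp g (ENNReal.ofReal p) μ) (s : Set Ω) :
    ∫ ω in s, |g ω| ∂μ ≤ (∫ ω in s, |g ω| ^ p ∂μ) ^ (1 / p) * μ.real s ^ (1 / q) := by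
  have := integral_mul_le_Lp_mul_Lq_of_nonneg (μ := μ.restrict s) hpq
    (.of_forall fun ω => abs_nonneg (g ω)) (.of_forall fun _ => zero_le_one)
    (by simpa only [Real.norm_eq_abs] using hg.norm.restrict s) (memLp_const 1)
  simpa using this

theorem exists_le_meanExcessBound_of_mem [IsProbabilityMeasure μ] {p m v t y : ℝ} (hp : 1 < p)
    (hv : 0 ≤ v) (hy : y ∈ meanExcessMomentSet μ p m v t) :
    ∃ α ∈ Icc (0 : ℝ) 1, y ≤ meanExcessBound p m v t α := by
  obtain ⟨X, hX_meas, hX, hX_mean, hmom_int, hmom, rfl⟩ := hy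
  set g : Ω → ℝ := fun ω => X ω - m
  have hg : Integrable g μ := hX.sub (integrable_const m)
  have hg_mean : ∫ ω, g ω ∂μ = 0 := by
    simp [g, integral_sub hX (integrable_const m), hX_mean]
  have hg_memLp : MemLp g (ENNReal.ofReal p) μ := by
    rw [← integrable_norm_rpow_iff hg.aestronglyMeasurable (by simpa using by linarith)
      ENNReal.ofReal_ne_top, ENNReal.toReal_ofReal (by linarith)]
    simpa only [Real.norm_eq_abs] using hmom_int
  set A := {ω | t < X ω}
  have hA : MeasurableSet A := measurableSet_lt measurable_const hX_meas
  set w := μ.real A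
  have hw : w ∈ Icc 0 1 := ⟨measureReal_nonneg, measureReal_le_one⟩
  have hy : ∫ ω, max (X ω - t) 0 ∂μ = ∫ ω in A, g ω ∂μ + w * (m - t) := by
    have : (fun ω => max (X ω - t) 0) = A.indicator fun ω => g ω + (m - t) := by
      ext ω
      by_cases hω : t < X ω
      · simp [A, g, hω, hω.le]
      · simp [A, g, hω, not_lt.mp hω]
    rw [this, integral_indicator hA, integral_add hg.integrableOn (integrable_const _),
      setIntegral_const, smul_eq_mul]
  set q := p.conjExponent
  have hpq : p.HolderConjugate q := .conjExponent hp
  have hIa : ∫ ω in A, g ω ∂μ ≤ (∫ ω in A, |g ω| ^ p ∂μ) ^ (1 / p) * w ^ (1 / q) :=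
    (le_abs_self _).trans (abs_integral_le_integral_abs.trans
      (setIntegral_abs_le_of_memLp hpq hg_memLp A))
  have hIb : ∫ ω in A, g ω ∂μ ≤ (∫ ω in Aᶜ, |g ω| ^ p ∂μ) ^ (1 / p) * (1 - w) ^ (1 / q) := by
    have hcompl : ∫ ω in A, g ω ∂μ = -∫ ω in Aᶜ, g ω ∂μ := by
      linarith [integral_add_compl hA hg]
    rw [hcompl, ← probReal_compl_eq_one_sub hA]
    exact (neg_le_abs _).trans (abs_integral_le_integral_abs.trans
      (setIntegral_abs_le_of_memLp hpq hg_memLp Aᶜ))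
  have hab : ∫ ω in A, |g ω| ^ p ∂μ + ∫ ω in Aᶜ, |g ω| ^ p ∂μ ≤ v ^ p :=
    (integral_add_compl hA hmom_int).trans_le hmom
  refine ⟨1 - w, ⟨sub_nonneg.mpr hw.2, sub_le_self 1 hw.1⟩, ?_⟩
  rw [hy, meanExcessBound, sub_sub_cancel]
  linarith [le_mul_momentFactor_one_sub hpq hv hw (integral_nonneg fun _ => by positivity)
    (integral_nonneg fun _ => by positivity) hab hIa hIb]

theorem integrable_comp_ite [IsFiniteMeasure μ] {A : Set Ω} [DecidablePred (· ∈ A)]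
    (hA : MeasurableSet A) (h : ℝ → ℝ) (c e : ℝ) :
    Integrable (fun ω => h (if ω ∈ A then c else e)) μ := by
  simp_rw [apply_ite h]
  exact Integrable.piecewise hA integrableOn_const integrableOn_const

theorem integral_comp_ite [IsFiniteMeasure μ] {A : Set Ω} [DecidablePred (· ∈ A)]
    (hA : MeasurableSet A) (h : ℝ → ℝ) (c e : ℝ) :
    ∫ ω, h (if ω ∈ A then c else e) ∂μ = μ.real A * h c + μ.real Aᶜ * h e := by
  simp_rw [apply_ite h]
  refine (integral_piecewise hA integrableOn_const integrableOn_const).trans ?_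
  rw [setIntegral_const, setIntegral_const, smul_eq_mul, smul_eq_mul]

section LowerBound

variable [IsProbabilityMeasure μ] {p m v t : ℝ}

theorem max_sub_zero_mem_meanExcessMomentSet (hp : 0 < p) (hv : 0 ≤ v) :
    max (m - t) 0 ∈ meanExcessMomentSet μ p m v t :=
  ⟨fun _ => m, measurable_const, integrable_const m, by simp, by simp [Real.zero_rpow hp.ne'],
    by simpa [Real.zero_rpow hp.ne'] using by positivity, by simp⟩

theorem exists_mem_meanExcessMomentSet_ge_of_mem_Ioo (hμ : Atomless μ) (hp : 1 < p)
    (hv : 0 ≤ v) {α : ℝ} (hα : α ∈ Ioo 0 1) :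
    ∃ y ∈ meanExcessMomentSet μ p m v t, meanExcessBound p m v t α ≤ y := by
  classical
  obtain ⟨hα₀, hα₁⟩ := hα
  have h₁ : 0 < 1 - α := sub_pos.mpr hα₁
  obtain ⟨A, hA, hμA⟩ := hμ.exists_measurableSet_measure_eq (r := ENNReal.ofReal (1 - α))
    (by simpa using hα₀.le)
  have hA_real : μ.real A = 1 - α := by simp [measureReal_def, hμA, h₁.le]
  have hAc_real : μ.real Aᶜ = α := by rw [probReal_compl_eq_one_sub hA, hA_real, sub_sub_cancel]
  set S := (1 - α) ^ (1 - p) + α ^ (1 - p)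
  have hS : 0 < S := by positivity
  set s := v * S ^ (-1 / p)
  have hs : 0 ≤ s := by positivity
  set X : Ω → ℝ := fun ω => if ω ∈ A then m + s / (1 - α) else m - s / α
  have hX_integral (h : ℝ → ℝ) :
      ∫ ω, h (X ω) ∂μ = (1 - α) * h (m + s / (1 - α)) + α * h (m - s / α) := by
    rw [integral_comp_ite hA, hA_real, hAc_real]
  have hjump {x : ℝ} (hx : 0 < x) : x * |s / x| ^ p = s ^ p * x ^ (1 - p) := by
    rw [abs_of_nonneg (by positivity), Real.div_rpow hs hx.le, Real.rpow_sub hx, Real.rpow_one]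
    ring
  have hmom : ∫ ω, |X ω - m| ^ p ∂μ = v ^ p := by
    rw [hX_integral fun x => |x - m| ^ p, add_sub_cancel_left, sub_sub_cancel_left, abs_neg,
      hjump h₁, hjump hα₀, ← mul_add, Real.mul_rpow hv (by positivity), ← Real.rpow_mul hS.le,
      div_mul_cancel₀ _ (by linarith), Real.rpow_neg_one, mul_assoc, inv_mul_cancel₀ hS.ne',
      mul_one]
  have hmean : ∫ ω, X ω ∂μ = m := (hX_integral id).trans (by simp only [id]; field_simp; ring)
  refine ⟨_, ⟨X, Measurable.ite hA measurable_const measurable_const,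
    integrable_comp_ite hA id _ _, hmean, integrable_comp_ite hA (|· - m| ^ p) _ _, hmom.le, rfl⟩,
    ?_⟩
  rw [hX_integral fun x => max (x - t) 0, meanExcessBound, momentFactor_of_mem_Ioo ⟨hα₀, hα₁⟩]
  calc (1 - α) * (m - t) + s = (1 - α) * (m + s / (1 - α) - t) := by field_simp; ring
    _ ≤ _ := le_add_of_le_of_nonneg (mul_le_mul_of_nonneg_left (le_max_left _ _) h₁.le)
      (mul_nonneg hα₀.le (le_max_right _ _))

theorem exists_mem_meanExcessMomentSet_ge (hμ : Atomless μ) (hp : 1 < p) (hv : 0 ≤ v) {α : ℝ}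
    (hα : α ∈ Icc 0 1) :
    ∃ y ∈ meanExcessMomentSet μ p m v t, meanExcessBound p m v t α ≤ y := by
  rcases hα.1.eq_or_lt with rfl | hα₀
  · exact ⟨_, max_sub_zero_mem_meanExcessMomentSet (by linarith) hv,
      by simp [meanExcessBound, momentFactor_zero hp]⟩
  rcases hα.2.eq_or_lt with rfl | hα₁
  · exact ⟨_, max_sub_zero_mem_meanExcessMomentSet (by linarith) hv,
      by simp [meanExcessBound, momentFactor_one hp]⟩
  exact exists_mem_meanExcessMomentSet_ge_of_mem_Ioo hμ hp hv ⟨hα₀, hα₁⟩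

end LowerBound

end Measure

/-- **Worst-case mean excess value under moment uncertainty.** For `p > 1`, `m, t ∈ ℝ` and
`v ≥ 0`, the supremum of `E[(X - t)_+]` over `L^p(m, v)` equals the maximum over `α ∈ [0,1]`
of `(1-α)(m-t) + v ((1-α)^{1-p} + α^{1-p})^{-1/p}`, where the inner expression is computed in
`[0, ∞]` so that the conventions `1/0 = ∞` and `1/∞ = 0` hold at the endpoints. -/
theorem worst_case_mean_excess_moment {Ω : Type*} [MeasurableSpace Ω] (μ : Measure Ω)
    [IsProbabilityMeasure μ] (hμ : Atomless μ)
    (p m v t : ℝ) (hp : 1 < p) (hv : 0 ≤ v) :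
    IsGreatest {y : ℝ | ∃ α ∈ Set.Icc (0 : ℝ) 1, y = (1 - α) * (m - t) +
        v * ((ENNReal.ofReal (1 - α) ^ (1 - p) + ENNReal.ofReal α ^ (1 - p)) ^ (-1 / p)).toReal}
      (sSup (meanExcessMomentSet μ p m v t)) := by
  obtain ⟨α₀, hα₀, hmax⟩ := isCompact_Icc.exists_isMaxOn (nonempty_Icc.mpr zero_le_one)
    (continuous_meanExcessBound hp m v t).continuousOn
  obtain ⟨y₀, hy₀, hle⟩ := exists_mem_meanExcessMomentSet_ge hμ hp hv hα₀
  have hbound : ∀ y ∈ meanExcessMomentSet μ p m v t, y ≤ meanExcessBound p m v t α₀ := by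
    intro y hy
    obtain ⟨α, hα, hyα⟩ := exists_le_meanExcessBound_of_mem hp hv hy
    exact hyα.trans (hmax hα)
  have hsup : sSup (meanExcessMomentSet μ p m v t) = meanExcessBound p m v t α₀ :=
    (IsGreatest.csSup_eq ⟨hy₀, fun y hy => (hbound y hy).trans hle⟩).trans
      ((hbound y₀ hy₀).antisymm hle)
  rw [hsup]
  exact ⟨⟨α₀, hα₀, rfl⟩, fun _ ⟨α, hα, hy⟩ => hy ▸ hmax hα⟩
end

section
/- For m, t ∈ ℝ and v ≥ 0, the supremum of E[(X − t)_+] over all integrable random variables X on an atomless probability space with E[X] = m and E[(X − m)²] ≤ v² equals (1/2)·( m − t + √(v² + (m − t)²) ), and also equals max over α ∈ [0,1] of { (1 − α)(m − t) + v·√(α(1 − α)) }. -/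
/-!
With `Y = X - t` one has `Y₊ = (Y + |Y|) / 2` and `E|Y| ≤ √(E Y²) = √(Var X + (m - t)²)`, which
gives the upper bound `(m - t + R) / 2` with `R = √(v² + (m - t)²)`. It is attained by the
two-point law with mass `p = (R + m - t) / (2R)` at `t + R` and `1 - p` at `t - R`: an atomless
probability space carries events of every probability (Sierpiński's theorem, proved by greedy
exhaustion). The second formula is the same bound by Cauchy–Schwarz, since
`((1 - 2α) / 2, √(α(1 - α)))` has length `1 / 2`.
-/

open MeasureTheory Set

/-- The set of mean excess values `E[(X - t)_+]` achieved by integrable random variables `X`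
with mean `m` and variance (second centralized moment) at most `v²` (the set `L²(m, v)`). -/
def meanExcessVarianceSet {Ω : Type*} [MeasurableSpace Ω] (μ : Measure Ω)
    (m v t : ℝ) : Set ℝ :=
  {y : ℝ | ∃ X : Ω → ℝ, Measurable X ∧ Integrable X μ ∧ (∫ ω, X ω ∂μ) = m ∧
    Integrable (fun ω => (X ω - m) ^ 2) μ ∧ (∫ ω, (X ω - m) ^ 2 ∂μ) ≤ v ^ 2 ∧
    y = ∫ ω, max (X ω - t) 0 ∂μ}

open ProbabilityTheory

section Moments

variable {Ω : Type*} [MeasurableSpace Ω] {μ : Measure Ω} [IsProbabilityMeasure μ] {Y : Ω → ℝ}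

lemma sq_integral_abs_le_integral_sq (hY : MemLp Y 2 μ) :
    (∫ ω, |Y ω| ∂μ) ^ 2 ≤ ∫ ω, Y ω ^ 2 ∂μ := by
  have h := variance_eq_sub hY.abs
  simp only [Pi.pow_apply, Pi.abs_apply, sq_abs] at h
  linarith [variance_nonneg |Y| μ]

lemma integral_max_zero_le (hY : MemLp Y 2 μ) :
    ∫ ω, max (Y ω) 0 ∂μ ≤ (∫ ω, Y ω ∂μ + √(∫ ω, Y ω ^ 2 ∂μ)) / 2 := by
  have hYi : Integrable Y μ := hY.integrable one_le_two
  have h_abs : ∫ ω, |Y ω| ∂μ ≤ √(∫ ω, Y ω ^ 2 ∂μ) :=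
    (le_abs_self _).trans (Real.abs_le_sqrt (sq_integral_abs_le_integral_sq hY))
  have h_max : (fun ω => max (Y ω) 0) = fun ω => (Y ω + |Y ω|) / 2 := by
    funext ω
    rcases le_total (Y ω) 0 with h | h
    · rw [max_eq_right h, abs_of_nonpos h]; ring
    · rw [max_eq_left h, abs_of_nonneg h]; ring
  rw [h_max, integral_div, integral_add hYi hYi.abs]
  linarith

lemma integral_add_const_sq (hY : MemLp Y 2 μ) (c : ℝ) :
    ∫ ω, (Y ω + c) ^ 2 ∂μ = ∫ ω, Y ω ^ 2 ∂μ + 2 * c * ∫ ω, Y ω ∂μ + c ^ 2 := by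
  have hYi : Integrable Y μ := hY.integrable one_le_two
  have hlin : Integrable (fun ω => 2 * Y ω * c) μ := (hYi.const_mul 2).mul_const c
  have hquad : Integrable (fun ω => Y ω ^ 2 + 2 * Y ω * c) μ := hY.integrable_sq.add hlin
  simp_rw [add_sq]
  rw [integral_add hquad (integrable_const _),
    integral_add hY.integrable_sq hlin, integral_mul_const, integral_const_mul, integral_const,
    probReal_univ, one_smul]
  ring

end Moments

section TwoPoint

variable {Ω : Type*} [MeasurableSpace Ω] {μ : Measure Ω} [IsProbabilityMeasure μ] {A : Set Ω}
  [DecidablePred (· ∈ A)]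

lemma integrable_comp_piecewise_const (hA : MeasurableSet A) (f : ℝ → ℝ) (x y : ℝ) :
    Integrable (fun ω => f (A.piecewise (fun _ => x) (fun _ => y) ω)) μ := by
  rw [← A.piecewise_op (h := fun _ => f)]
  exact Integrable.piecewise hA (integrable_const _).integrableOn (integrable_const _).integrableOn

lemma integral_comp_piecewise_const (hA : MeasurableSet A) (f : ℝ → ℝ) (x y : ℝ) :
    ∫ ω, f (A.piecewise (fun _ => x) (fun _ => y) ω) ∂μ
      = μ.real A * f x + (1 - μ.real A) * f y := by
  rw [← A.piecewise_op (h := fun _ => f), integral_piecewise hA (integrable_const _).integrableOn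
    (integrable_const _).integrableOn, setIntegral_const, setIntegral_const,
    measureReal_compl hA, probReal_univ, smul_eq_mul, smul_eq_mul]

end TwoPoint

section FiniteMeasure

variable {Ω : Type*} [MeasurableSpace Ω] {μ : Measure Ω} [IsFiniteMeasure μ]

lemma exists_superset_measureReal_le (β : ℝ) {C : Set Ω} (hC : MeasurableSet C)
    (hCβ : μ.real C ≤ β) :
    ∃ C', MeasurableSet C' ∧ C ⊆ C' ∧ μ.real C' ≤ β ∧
      ∀ E, MeasurableSet E → Disjoint C E → μ.real C + μ.real E ≤ β →
        μ.real C + μ.real E / 2 ≤ μ.real C' := by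
  set S := (fun E => μ.real E) ''
    {E | MeasurableSet E ∧ Disjoint C E ∧ μ.real C + μ.real E ≤ β}
  have hS_bdd : BddAbove S := ⟨β - μ.real C, by rintro _ ⟨E, ⟨-, -, hE⟩, rfl⟩; linarith⟩
  have hS_zero : (0 : ℝ) ∈ S := ⟨∅, ⟨.empty, disjoint_empty _, by simpa⟩, measureReal_empty⟩
  have hS_le : ∀ x ∈ S, x ≤ sSup S := fun x hx => le_csSup hS_bdd hx
  obtain ⟨D, ⟨hD, hCD, hDβ⟩, hD_half⟩ : ∃ D ∈ {E | MeasurableSet E ∧ Disjoint C E ∧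
      μ.real C + μ.real E ≤ β}, sSup S / 2 ≤ μ.real D := by
    rcases (hS_le 0 hS_zero).eq_or_lt with h | h
    · exact ⟨∅, ⟨.empty, disjoint_empty _, by simpa⟩, by simp [← h]⟩
    · obtain ⟨_, ⟨D, hDmem, rfl⟩, hlt⟩ := exists_lt_of_lt_csSup ⟨0, hS_zero⟩ (half_lt_self h)
      exact ⟨D, hDmem, hlt.le⟩
  refine ⟨C ∪ D, hC.union hD, subset_union_left, ?_, fun E hE hCE hEβ => ?_⟩
  · rwa [measureReal_union hCD hD]
  · have := hS_le _ ⟨E, ⟨hE, hCE, hEβ⟩, rfl⟩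
    rw [measureReal_union hCD hD]
    linarith

namespace Atomless

open Filter Topology

lemma exists_subset_measureReal_pos_lt (hμ : Atomless μ) {A : Set Ω} (hA : MeasurableSet A)
    (hA0 : 0 < μ.real A) : ∃ B ⊆ A, MeasurableSet B ∧ 0 < μ.real B ∧ μ.real B < μ.real A := by
  obtain ⟨B, hBA, hB, hB0, hBA'⟩ := hμ A hA ((measureReal_ne_zero_iff).1 hA0.ne')
  refine ⟨B, hBA, hB, measureReal_nonneg.lt_of_ne' ((measureReal_ne_zero_iff).2 hB0),
    (measureReal_mono hBA).lt_of_ne fun h => hBA' ((measureReal_eq_measureReal_iff).1 h)⟩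

lemma exists_subset_measureReal_pos_le_half (hμ : Atomless μ) {A : Set Ω}
    (hA : MeasurableSet A) (hA0 : 0 < μ.real A) :
    ∃ B ⊆ A, MeasurableSet B ∧ 0 < μ.real B ∧ μ.real B ≤ μ.real A / 2 := by
  obtain ⟨B, hBA, hB, hB0, hBA'⟩ := hμ.exists_subset_measureReal_pos_lt hA hA0
  have hsplit : μ.real (A \ B) = μ.real A - μ.real B := measureReal_sdiff hBA hB
  rcases le_total (μ.real B) (μ.real A / 2) with h | h
  · exact ⟨B, hBA, hB, hB0, h⟩
  · exact ⟨A \ B, sdiff_subset, hA.diff hB, by linarith, by linarith⟩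

lemma exists_subset_measureReal_pos_le (hμ : Atomless μ) {A : Set Ω} (hA : MeasurableSet A)
    (hA0 : 0 < μ.real A) {ε : ℝ} (hε : 0 < ε) :
    ∃ B ⊆ A, MeasurableSet B ∧ 0 < μ.real B ∧ μ.real B ≤ ε := by
  have hpow : ∀ n : ℕ, ∃ B ⊆ A, MeasurableSet B ∧ 0 < μ.real B ∧
      μ.real B ≤ μ.real A * (1 / 2) ^ n := by
    intro n
    induction n with
    | zero => exact ⟨A, subset_rfl, hA, hA0, by simp⟩
    | succ n ih =>
      obtain ⟨B, hBA, hB, hB0, hBle⟩ := ih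
      obtain ⟨B', hB'B, hB', hB'0, hB'le⟩ := hμ.exists_subset_measureReal_pos_le_half hB hB0
      exact ⟨B', hB'B.trans hBA, hB', hB'0, by rw [pow_succ]; linarith⟩
  obtain ⟨n, hn⟩ := exists_pow_lt_of_lt_one (div_pos hε hA0) (by norm_num : (1 / 2 : ℝ) < 1)
  obtain ⟨B, hBA, hB, hB0, hBle⟩ := hpow n
  refine ⟨B, hBA, hB, hB0, hBle.trans ?_⟩
  rw [lt_div_iff₀ hA0] at hn
  linarith

theorem exists_measureReal_eq (hμ : Atomless μ) {β : ℝ} (hβ0 : 0 ≤ β)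
    (hβ : β ≤ μ.real univ) : ∃ A, MeasurableSet A ∧ μ.real A = β := by
  choose! next h_meas h_sub h_le h_grow using
    fun C (hC : MeasurableSet C) (hCβ : μ.real C ≤ β) =>
      exists_superset_measureReal_le (μ := μ) β hC hCβ
  set C : ℕ → Set Ω := fun n => next^[n] ∅
  have hC_succ : ∀ n, C (n + 1) = next (C n) := fun n => Function.iterate_succ_apply' next n ∅
  have hC : ∀ n, MeasurableSet (C n) ∧ μ.real (C n) ≤ β := by
    intro n
    induction n with
    | zero => exact ⟨.empty, by simpa [C]⟩
    | succ n ih => rw [hC_succ]; exact ⟨h_meas _ ih.1 ih.2, h_le _ ih.1 ih.2⟩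
  have hC_mono : Monotone C :=
    monotone_nat_of_le_succ fun n => hC_succ n ▸ h_sub _ (hC n).1 (hC n).2
  set A := ⋃ n, C n
  have hA : MeasurableSet A := .iUnion fun n => (hC n).1
  have h_tendsto : Tendsto (fun n => μ.real (C n)) atTop (𝓝 (μ.real A)) :=
    (ENNReal.tendsto_toReal (measure_ne_top μ A)).comp (tendsto_measure_iUnion_atTop hC_mono)
  have hAβ : μ.real A ≤ β := le_of_tendsto' h_tendsto fun n => (hC n).2
  refine ⟨A, hA, hAβ.antisymm (not_lt.1 fun hlt => ?_)⟩
  -- such a `D` stays admissible at every step, so every step would gain `μ.real D / 2`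
  obtain ⟨D, hDA, hD, hD0, hDβ⟩ := hμ.exists_subset_measureReal_pos_le hA.compl
    (by rw [measureReal_compl hA]; linarith) (sub_pos.2 hlt)
  have hCA : ∀ n, μ.real (C n) ≤ μ.real A := fun n => measureReal_mono (subset_iUnion C n)
  have h_step : ∀ n, μ.real (C n) + μ.real D / 2 ≤ μ.real A := fun n =>
    (h_grow _ (hC n).1 (hC n).2 D hD
      (disjoint_compl_right.mono (subset_iUnion C n) hDA) (by linarith [hCA n])).trans
      (hC_succ n ▸ hCA (n + 1))
  have := le_of_tendsto' (h_tendsto.add_const (μ.real D / 2)) h_step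
  linarith

end Atomless

end FiniteMeasure

section MeanExcess

variable {Ω : Type*} [MeasurableSpace Ω] {μ : Measure Ω} [IsProbabilityMeasure μ]

lemma le_of_mem_meanExcessVarianceSet {m v t y : ℝ} (hy : y ∈ meanExcessVarianceSet μ m v t) :
    y ≤ (1 / 2) * (m - t + √(v ^ 2 + (m - t) ^ 2)) := by
  obtain ⟨X, hX, hXi, hXm, hX2i, hX2, rfl⟩ := hy
  have hY : MemLp (fun ω => X ω - m) 2 μ :=
    (memLp_two_iff_integrable_sq (hX.sub_const m).aestronglyMeasurable).2 hX2i
  have hY_mean : ∫ ω, (X ω - m) ∂μ = 0 := by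
    rw [integral_sub hXi (integrable_const m), hXm, integral_const, probReal_univ, one_smul,
      sub_self]
  have hYt : MemLp (fun ω => X ω - t) 2 μ := by
    convert hY.add (memLp_const (m - t)) using 1
    ext ω
    simp
  have h_mean : ∫ ω, (X ω - t) ∂μ = m - t := by
    rw [integral_sub hXi (integrable_const t), hXm, integral_const, probReal_univ, one_smul]
  have h_sq : ∫ ω, (X ω - t) ^ 2 ∂μ = ∫ ω, (X ω - m) ^ 2 ∂μ + (m - t) ^ 2 := by
    have := integral_add_const_sq hY (m - t)
    simp only [sub_add_sub_cancel, hY_mean] at this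
    linarith
  have h_excess := integral_max_zero_le hYt
  rw [h_mean, h_sq] at h_excess
  have h_var : ∫ ω, (X ω - m) ^ 2 ∂μ + (m - t) ^ 2 ≤ v ^ 2 + (m - t) ^ 2 := by linarith
  linarith [Real.sqrt_le_sqrt h_var]

lemma Atomless.half_add_sqrt_mem_meanExcessVarianceSet (hμ : Atomless μ) (m v t : ℝ) :
    (1 / 2) * (m - t + √(v ^ 2 + (m - t) ^ 2)) ∈ meanExcessVarianceSet μ m v t := by
  classical
  set s := m - t
  set R := √(v ^ 2 + s ^ 2)
  have hR2 : R ^ 2 = v ^ 2 + s ^ 2 := Real.sq_sqrt (by positivity)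
  have h_abs : |s| ≤ R := Real.abs_le_sqrt (le_add_of_nonneg_left (sq_nonneg v))
  obtain ⟨hs_lower, hs_upper⟩ := abs_le.1 h_abs
  set p := (R + s) / (2 * R)
  have hp : 2 * R * p = R + s := by
    rcases eq_or_ne R 0 with h | h
    · simp only [h, mul_zero, zero_mul, zero_add]; linarith
    · exact mul_div_cancel₀ _ (mul_ne_zero two_ne_zero h)
  obtain ⟨A, hA, hAp⟩ := hμ.exists_measureReal_eq (β := p) (div_nonneg (by linarith) (by linarith))
    (by rw [probReal_univ]; exact div_le_one_of_le₀ (by linarith) (by linarith))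
  refine ⟨A.piecewise (fun _ => t + R) (fun _ => t - R),
    measurable_const.piecewise hA measurable_const,
    integrable_comp_piecewise_const (μ := μ) hA id _ _,
    (integral_comp_piecewise_const (μ := μ) hA id _ _).trans ?_,
    integrable_comp_piecewise_const hA (fun x => (x - m) ^ 2) _ _,
    (integral_comp_piecewise_const hA (fun x => (x - m) ^ 2) _ _).trans_le ?_,
    ((integral_comp_piecewise_const hA (fun x => max (x - t) 0) _ _).trans ?_).symm⟩ <;>
    simp only [hAp, id, add_sub_cancel_left, sub_sub_cancel_left]
  · linear_combination hp
  · linear_combination (-2 * s) * hp + hR2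
  · rw [max_eq_left (by linarith : 0 ≤ R), max_eq_right (by linarith : -R ≤ 0)]
    linear_combination (1 / 2) * hp

end MeanExcess

lemma isGreatest_one_sub_mul_add_mul_sqrt (s : ℝ) {v : ℝ} (hv : 0 ≤ v) :
    IsGreatest {y : ℝ | ∃ α ∈ Icc (0 : ℝ) 1, y = (1 - α) * s + v * √(α * (1 - α))}
      ((1 / 2) * (s + √(v ^ 2 + s ^ 2))) := by
  set R := √(v ^ 2 + s ^ 2)
  have hR0 : 0 ≤ R := Real.sqrt_nonneg _
  have hR2 : R ^ 2 = v ^ 2 + s ^ 2 := Real.sq_sqrt (by positivity)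
  refine ⟨?_, ?_⟩
  · rcases hR0.eq_or_lt with hR | hR
    · have hv0 : v = 0 := by nlinarith
      have hs0 : s = 0 := by nlinarith
      exact ⟨0, left_mem_Icc.2 zero_le_one, by simp [hv0, hs0, ← hR]⟩
    have h_abs : |s| ≤ R := Real.abs_le_sqrt (le_add_of_nonneg_left (sq_nonneg v))
    obtain ⟨hs_lower, hs_upper⟩ := abs_le.1 h_abs
    have hprod : (R - s) / (2 * R) * (1 - (R - s) / (2 * R)) = (v / (2 * R)) ^ 2 := by
      field_simp
      linear_combination hR2
    refine ⟨(R - s) / (2 * R),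
      ⟨div_nonneg (by linarith) (by positivity), div_le_one_of_le₀ (by linarith) (by positivity)⟩,
      ?_⟩
    rw [hprod, Real.sqrt_sq (by positivity)]
    field_simp
    linear_combination hR2
  · rintro y ⟨α, ⟨hα0, hα1⟩, rfl⟩
    set w := √(α * (1 - α))
    have hw2 : w ^ 2 = α * (1 - α) := Real.sq_sqrt (by nlinarith)
    have hcs : ((1 - 2 * α) / 2 * s + v * w) ^ 2 ≤ (R / 2) ^ 2 := by
      rw [div_pow, hR2]
      nlinarith [sq_nonneg ((1 - 2 * α) / 2 * v - w * s)]
    linarith [(abs_le_of_sq_le_sq' hcs (by positivity)).2]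

lemma Atomless.isGreatest_meanExcessVarianceSet {Ω : Type*} [MeasurableSpace Ω] {μ : Measure Ω}
    [IsProbabilityMeasure μ] (hμ : Atomless μ) (m v t : ℝ) :
    IsGreatest (meanExcessVarianceSet μ m v t) ((1 / 2) * (m - t + √(v ^ 2 + (m - t) ^ 2))) :=
  ⟨hμ.half_add_sqrt_mem_meanExcessVarianceSet m v t, fun _ => le_of_mem_meanExcessVarianceSet⟩

/-- **Worst-case mean excess value under mean–variance uncertainty.** The supremum of
`E[(X - t)_+]` over `L²(m, v)` equals `(1/2)(m - t + √(v² + (m - t)²))`, and also equals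
the maximum over `α ∈ [0,1]` of `(1-α)(m-t) + v √(α(1-α))`. -/
theorem worst_case_mean_excess_variance {Ω : Type*} [MeasurableSpace Ω] (μ : Measure Ω)
    [IsProbabilityMeasure μ] (hμ : Atomless μ) (m v t : ℝ) (hv : 0 ≤ v) :
    sSup (meanExcessVarianceSet μ m v t)
        = (1 / 2) * (m - t + Real.sqrt (v ^ 2 + (m - t) ^ 2)) ∧
      IsGreatest {y : ℝ | ∃ α ∈ Set.Icc (0 : ℝ) 1,
          y = (1 - α) * (m - t) + v * Real.sqrt (α * (1 - α))}
        (sSup (meanExcessVarianceSet μ m v t)) := by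
  rw [(hμ.isGreatest_meanExcessVarianceSet m v t).csSup_eq]
  exact ⟨rfl, isGreatest_one_sub_mul_add_mul_sqrt (m - t) hv⟩
end

section
/- For p > 1, m ∈ ℝ, v ≥ 0 and α ∈ (0,1), the supremum of ES_α(X) over all integrable random variables X on an atomless probability space with E[X] = m and E[|X − m|^p] ≤ v^p equals m + v·α·(α^p(1 − α) + (1 − α)^p·α)^{−1/p}. -/
open MeasureTheory Set

set_option maxHeartbeats 2000000

namespace WCES

open Filter Topology ENNReal
open scoped Classical

variable {Ω : Type*} [MeasurableSpace Ω] {μ : Measure Ω} {X : Ω → ℝ}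

lemma atomless_exists_half [IsFiniteMeasure μ] (hμ : Atomless μ) {A : Set Ω}
    (hA : MeasurableSet A) (h0 : μ A ≠ 0) :
    ∃ B ⊆ A, MeasurableSet B ∧ μ B ≠ 0 ∧ μ B ≤ μ A / 2 := by
  obtain ⟨B, hBA, hBm, hB0, hBne⟩ := hμ A hA h0
  by_cases h : μ B ≤ μ A / 2
  · exact ⟨B, hBA, hBm, hB0, h⟩
  · have hBle : μ B ≤ μ A := measure_mono hBA
    have hdiff : μ (A \ B) = μ A - μ B :=
      measure_diff hBA hBm.nullMeasurableSet (measure_ne_top μ B)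
    refine ⟨A \ B, diff_subset, hA.diff hBm, ?_, ?_⟩
    · rw [hdiff]
      intro hz
      exact hBne (le_antisymm hBle (tsub_eq_zero_iff_le.mp hz))
    · rw [hdiff]
      calc μ A - μ B ≤ μ A - μ A / 2 := tsub_le_tsub_left (not_le.mp h).le _
        _ = μ A / 2 := ENNReal.sub_half (measure_ne_top μ A)

lemma atomless_exists_small [IsProbabilityMeasure μ] (hμ : Atomless μ) {A : Set Ω}
    (hA : MeasurableSet A) (h0 : μ A ≠ 0) {ε : ℝ≥0∞} (hε : ε ≠ 0) :
    ∃ B ⊆ A, MeasurableSet B ∧ μ B ≠ 0 ∧ μ B ≤ ε := by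
  have key : ∀ n : ℕ, ∃ B ⊆ A, MeasurableSet B ∧ μ B ≠ 0 ∧ μ B ≤ 2⁻¹ ^ n := by
    intro n
    induction n with
    | zero => exact ⟨A, Subset.rfl, hA, h0, by simpa using prob_le_one⟩
    | succ n ih =>
      obtain ⟨B, hBA, hBm, hB0, hBle⟩ := ih
      obtain ⟨C, hCB, hCm, hC0, hCle⟩ := atomless_exists_half hμ hBm hB0
      refine ⟨C, hCB.trans hBA, hCm, hC0, ?_⟩
      calc μ C ≤ μ B / 2 := hCle
        _ ≤ 2⁻¹ ^ n / 2 := by gcongr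
        _ = 2⁻¹ ^ (n + 1) := by
            rw [pow_succ, div_eq_mul_inv]
  obtain ⟨n, hn⟩ := ENNReal.exists_inv_two_pow_lt hε
  obtain ⟨B, h1, h2, h3, h4⟩ := key n
  exact ⟨B, h1, h2, h3, h4.trans hn.le⟩

lemma atomless_exists_measure_eq [IsProbabilityMeasure μ] (hμ : Atomless μ) {r : ℝ≥0∞}
    (hr : r ≤ 1) : ∃ B : Set Ω, MeasurableSet B ∧ μ B = r := by
  classical
  set s : Set Ω → ℝ≥0∞ :=
    fun B => sSup ((fun C => μ C) '' {C | B ⊆ C ∧ MeasurableSet C ∧ μ C ≤ r}) with hs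
  have hsle : ∀ B, s B ≤ r := by
    intro B
    apply sSup_le
    rintro x ⟨C, hC, rfl⟩
    exact hC.2.2
  have step : ∀ (n : ℕ) (B : Set Ω), ∃ C,
      (MeasurableSet B ∧ μ B ≤ r) →
        (B ⊆ C ∧ MeasurableSet C ∧ μ C ≤ r ∧ s B ≤ μ C + 2⁻¹ ^ n) := by
    intro n B
    by_cases hB : MeasurableSet B ∧ μ B ≤ r
    · by_cases hz : s B - 2⁻¹ ^ n = 0
      · refine ⟨B, fun _ => ⟨Subset.rfl, hB.1, hB.2, ?_⟩⟩
        rw [← tsub_le_iff_right, hz]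
        exact zero_le
      · have hfin : s B ≠ ∞ := ((hsle B).trans_lt (lt_of_le_of_lt hr (by norm_num))).ne
        have hlt : s B - 2⁻¹ ^ n < s B := by
          apply ENNReal.sub_lt_self hfin
          · intro h0'
            rw [h0', zero_tsub] at hz; exact hz rfl
          · exact pow_ne_zero n (by simp)
        rw [lt_sSup_iff] at hlt
        obtain ⟨x, ⟨C, hC, rfl⟩, hx⟩ := hlt
        exact ⟨C, fun _ => ⟨hC.1, hC.2.1, hC.2.2, tsub_le_iff_right.mp hx.le⟩⟩
    · exact ⟨∅, fun h => absurd h hB⟩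
  choose g hg using step
  set seq : ℕ → Set Ω := fun n => Nat.rec ∅ (fun k Bk => g k Bk) n with hseq
  have hseqS : ∀ n, seq (n + 1) = g n (seq n) := fun n => rfl
  have hinv : ∀ n, MeasurableSet (seq n) ∧ μ (seq n) ≤ r := by
    intro n
    induction n with
    | zero =>
      refine ⟨MeasurableSet.empty, ?_⟩
      show μ (∅ : Set Ω) ≤ r
      simp
    | succ n ih =>
      have := hg n (seq n) ih
      exact ⟨this.2.1, this.2.2.1⟩
  have hsub : ∀ n, seq n ⊆ seq (n + 1) := fun n => (hg n (seq n) (hinv n)).1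
  have hmono : Monotone seq := monotone_nat_of_le_succ hsub
  have hclose : ∀ n, s (seq n) ≤ μ (seq (n + 1)) + 2⁻¹ ^ n :=
    fun n => (hg n (seq n) (hinv n)).2.2.2
  set B := ⋃ n, seq n with hB
  have hBm : MeasurableSet B := MeasurableSet.iUnion fun n => (hinv n).1
  have htend : Tendsto (μ ∘ seq) atTop (𝓝 (μ B)) := tendsto_measure_iUnion_atTop hmono
  have hBr : μ B ≤ r := le_of_tendsto htend (Eventually.of_forall fun n => (hinv n).2)
  refine ⟨B, hBm, le_antisymm hBr (not_lt.mp fun hlt => ?_)⟩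
  have hc0 : μ Bᶜ ≠ 0 := by
    have hB1 : μ B < 1 := lt_of_lt_of_le hlt hr
    rw [measure_compl hBm (measure_ne_top μ B), measure_univ]
    intro h
    exact absurd (tsub_eq_zero_iff_le.mp h) hB1.not_ge
  obtain ⟨C, hCB, hCm, hC0, hCle⟩ :=
    atomless_exists_small hμ hBm.compl hc0 (ε := r - μ B) (by
      intro h
      exact absurd (tsub_eq_zero_iff_le.mp h) hlt.not_ge)
  have hkey : ∀ n, μ (seq n) + μ C ≤ μ (seq (n + 1)) + 2⁻¹ ^ n := by
    intro n
    have hdisj : Disjoint (seq n) C :=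
      disjoint_compl_right.mono (subset_iUnion seq n) hCB
    have hU : μ (seq n ∪ C) = μ (seq n) + μ C := measure_union hdisj hCm
    have hUr : μ (seq n ∪ C) ≤ r := by
      calc μ (seq n ∪ C) ≤ μ (seq n) + μ C := measure_union_le _ _
        _ ≤ μ B + (r - μ B) := add_le_add (measure_mono (subset_iUnion seq n)) hCle
        _ = r := add_tsub_cancel_of_le hlt.le
    have hmem : μ (seq n ∪ C) ≤ s (seq n) :=
      le_sSup ⟨seq n ∪ C, ⟨subset_union_left, (hinv n).1.union hCm, hUr⟩, rfl⟩
    calc μ (seq n) + μ C = μ (seq n ∪ C) := hU.symm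
      _ ≤ s (seq n) := hmem
      _ ≤ μ (seq (n + 1)) + 2⁻¹ ^ n := hclose n
  have h2 : Tendsto (fun n : ℕ => μ (seq (n + 1)) + 2⁻¹ ^ n) atTop (𝓝 (μ B + 0)) := by
    apply Tendsto.add
    · exact htend.comp (tendsto_add_atTop_nat 1)
    · exact ENNReal.tendsto_pow_atTop_nhds_zero_of_lt_one (by norm_num)
  have h1 : Tendsto (fun n : ℕ => μ (seq n) + μ C) atTop (𝓝 (μ B + μ C)) :=
    htend.add tendsto_const_nhds
  have hle : μ B + μ C ≤ μ B + 0 := le_of_tendsto_of_tendsto' h1 h2 hkey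
  rw [add_zero] at hle
  exact hC0 (le_antisymm (ENNReal.le_of_add_le_add_left (measure_ne_top μ B)
    (by simpa using hle)) zero_le)

lemma VaR_set_nonempty [IsProbabilityMeasure μ] {β : ℝ} (hβ : β < 1) :
    {t : ℝ | ENNReal.ofReal β ≤ μ {ω | X ω ≤ t}}.Nonempty := by
  have hmono : Monotone fun n : ℕ => {ω | X ω ≤ (n : ℝ)} := by
    intro a b hab ω hω
    simp only [mem_setOf_eq] at hω ⊢
    exact le_trans hω (Nat.cast_le.mpr hab)
  have hU : ⋃ n : ℕ, {ω | X ω ≤ (n : ℝ)} = univ := by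
    ext ω
    simp only [mem_iUnion, mem_setOf_eq, mem_univ, iff_true]
    obtain ⟨n, hn⟩ := exists_nat_ge (X ω)
    exact ⟨n, hn⟩
  have ht := tendsto_measure_iUnion_atTop (μ := μ) hmono
  rw [hU, measure_univ] at ht
  have hlt : ENNReal.ofReal β < 1 := ENNReal.ofReal_lt_one.mpr hβ
  obtain ⟨n, hn⟩ := (ht.eventually_const_le hlt).exists
  exact ⟨n, hn⟩

lemma VaR_set_bddBelow [IsProbabilityMeasure μ] (hX : Measurable X) {β : ℝ} (hβ : 0 < β) :
    BddBelow {t : ℝ | ENNReal.ofReal β ≤ μ {ω | X ω ≤ t}} := by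
  have hanti : Antitone fun n : ℕ => {ω | X ω ≤ -(n : ℝ)} := by
    intro a b hab ω hω
    simp only [mem_setOf_eq] at hω ⊢
    have : (a : ℝ) ≤ (b : ℝ) := Nat.cast_le.mpr hab
    linarith
  have hI : ⋂ n : ℕ, {ω | X ω ≤ -(n : ℝ)} = ∅ := by
    ext ω
    simp only [mem_iInter, mem_setOf_eq, mem_empty_iff_false, iff_false, not_forall, not_le]
    obtain ⟨n, hn⟩ := exists_nat_gt (-X ω)
    exact ⟨n, by linarith⟩
  have ht := tendsto_measure_iInter_atTop (μ := μ)
    (s := fun n : ℕ => {ω | X ω ≤ -(n : ℝ)})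
    (fun n => (hX measurableSet_Iic).nullMeasurableSet) hanti ⟨0, measure_ne_top μ _⟩
  rw [hI, measure_empty] at ht
  obtain ⟨n, hn⟩ := (ht.eventually_lt_const (ENNReal.ofReal_pos.mpr hβ)).exists
  refine ⟨-(n : ℝ), fun t ht' => ?_⟩
  by_contra h
  push_neg at h
  have hsub : μ {ω | X ω ≤ t} ≤ μ {ω | X ω ≤ -(n : ℝ)} :=
    measure_mono fun ω hω => le_trans hω h.le
  exact absurd (le_trans ht' hsub) hn.not_ge
  
lemma VaR_le_iff [IsProbabilityMeasure μ] (hX : Measurable X) {β t : ℝ}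
    (hβ0 : 0 < β) (hβ1 : β < 1) :
    VaR μ X β ≤ t ↔ ENNReal.ofReal β ≤ μ {ω | X ω ≤ t} := by
  constructor
  · intro h
    have hev : ∀ n : ℕ, ENNReal.ofReal β ≤ μ {ω | X ω ≤ t + ((n : ℝ) + 1)⁻¹} := by
      intro n
      have hlt : VaR μ X β < t + ((n : ℝ) + 1)⁻¹ :=
        lt_of_le_of_lt h (lt_add_of_pos_right _ (by positivity))
      rw [VaR] at hlt
      obtain ⟨u, hu, hut⟩ :=
        (csInf_lt_iff (VaR_set_bddBelow hX hβ0) (VaR_set_nonempty hβ1)).mp hlt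
      exact le_trans hu (measure_mono fun ω hω => le_trans hω hut.le)
    have hanti : Antitone fun n : ℕ => {ω | X ω ≤ t + ((n : ℝ) + 1)⁻¹} := by
      intro a b hab ω hω
      simp only [mem_setOf_eq] at hω ⊢
      have h1 : (a : ℝ) ≤ (b : ℝ) := Nat.cast_le.mpr hab
      have h2 : ((b : ℝ) + 1)⁻¹ ≤ ((a : ℝ) + 1)⁻¹ := by
        apply inv_anti₀ (by positivity)
        linarith
      linarith
    have hI : ⋂ n : ℕ, {ω | X ω ≤ t + ((n : ℝ) + 1)⁻¹} = {ω | X ω ≤ t} := by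
      ext ω
      simp only [mem_iInter, mem_setOf_eq]
      constructor
      · intro hall
        by_contra hgt
        push_neg at hgt
        obtain ⟨n, hn⟩ := exists_nat_one_div_lt (sub_pos.mpr hgt)
        have := hall n
        rw [one_div] at hn
        linarith
      · intro hle n
        have : (0:ℝ) < ((n : ℝ) + 1)⁻¹ := by positivity
        linarith
    have ht2 := tendsto_measure_iInter_atTop (μ := μ)
      (s := fun n : ℕ => {ω | X ω ≤ t + ((n : ℝ) + 1)⁻¹})
      (fun n => (hX measurableSet_Iic).nullMeasurableSet) hanti ⟨0, measure_ne_top μ _⟩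
    rw [hI] at ht2
    exact ge_of_tendsto ht2 (Eventually.of_forall hev)
  · intro h
    exact csInf_le (VaR_set_bddBelow hX hβ0) h

lemma VaR_monotoneOn [IsProbabilityMeasure μ] (hX : Measurable X) :
    MonotoneOn (VaR μ X) (Ioo (0 : ℝ) 1) := by
  intro β₁ h₁ β₂ h₂ h12
  exact csInf_le_csInf (VaR_set_bddBelow hX h₁.1) (VaR_set_nonempty h₂.2)
    (fun t ht => le_trans (ENNReal.ofReal_le_ofReal h12) ht)

lemma aemeasurable_VaR [IsProbabilityMeasure μ] (hX : Measurable X) :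
    AEMeasurable (VaR μ X) (volume.restrict (Ioo (0 : ℝ) 1)) :=
  aemeasurable_restrict_of_monotoneOn measurableSet_Ioo (VaR_monotoneOn hX)

lemma map_VaR [IsProbabilityMeasure μ] (hX : Measurable X) :
    (volume.restrict (Ioo (0 : ℝ) 1)).map (VaR μ X) = μ.map X := by
  have hq := aemeasurable_VaR (μ := μ) hX
  haveI : IsFiniteMeasure ((volume.restrict (Ioo (0 : ℝ) 1)).map (VaR μ X)) := by
    constructor
    rw [Measure.map_apply_of_aemeasurable hq MeasurableSet.univ]
    exact lt_of_le_of_lt (measure_mono (subset_univ _)) (by simp)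
  refine Measure.ext_of_Iic _ _ fun t => ?_
  rw [Measure.map_apply_of_aemeasurable hq measurableSet_Iic,
    Measure.map_apply hX measurableSet_Iic, Measure.restrict_apply' measurableSet_Ioo]
  have hne : μ {ω | X ω ≤ t} ≠ ∞ := measure_ne_top μ _
  set c := (μ {ω | X ω ≤ t}).toReal with hc
  have hc1 : c ≤ 1 := by
    rw [hc]
    exact ENNReal.toReal_le_of_le_ofReal (by norm_num) (by simpa using prob_le_one)
  have hc0 : 0 ≤ c := ENNReal.toReal_nonneg
  have hset : VaR μ X ⁻¹' Iic t ∩ Ioo 0 1 = Iic c ∩ Ioo 0 1 := by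
    ext β
    simp only [mem_inter_iff, mem_preimage, mem_Iic, mem_Ioo]
    constructor
    · rintro ⟨h1, h2⟩
      refine ⟨?_, h2⟩
      have := (VaR_le_iff hX h2.1 h2.2).mp h1
      rw [hc]
      exact (ENNReal.ofReal_le_iff_le_toReal hne).mp this
    · rintro ⟨h1, h2⟩
      refine ⟨?_, h2⟩
      rw [VaR_le_iff hX h2.1 h2.2]
      exact (ENNReal.ofReal_le_iff_le_toReal hne).mpr (by rw [← hc]; exact h1)
  rw [hset]
  have hXt : μ (X ⁻¹' Iic t) = ENNReal.ofReal c := by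
    rw [hc, ENNReal.ofReal_toReal hne]
    rfl
  rw [hXt]
  rcases lt_or_eq_of_le hc1 with h | h
  · have : Iic c ∩ Ioo (0:ℝ) 1 = Ioc 0 c := by
      ext β
      simp only [mem_inter_iff, mem_Iic, mem_Ioo, mem_Ioc]
      constructor
      · rintro ⟨h1, h2, h3⟩; exact ⟨h2, h1⟩
      · rintro ⟨h1, h2⟩; exact ⟨h2, h1, lt_of_le_of_lt h2 h⟩
    rw [this, Real.volume_Ioc, sub_zero]
  · have : Iic c ∩ Ioo (0:ℝ) 1 = Ioo 0 1 := by
      apply inter_eq_self_of_subset_right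
      intro β hβ
      simp only [mem_Iic]
      exact le_of_lt (h ▸ hβ.2)
    rw [this, Real.volume_Ioo, sub_zero, ← h]

lemma integrableOn_comp_VaR [IsProbabilityMeasure μ] (hX : Measurable X) {φ : ℝ → ℝ}
    (hφ : Measurable φ) (h : Integrable (fun ω => φ (X ω)) μ) :
    IntegrableOn (fun β => φ (VaR μ X β)) (Ioo (0 : ℝ) 1) := by
  have h1 : Integrable φ (μ.map X) :=
    (integrable_map_measure hφ.aestronglyMeasurable hX.aemeasurable).mpr h
  rw [← map_VaR hX] at h1
  exact (integrable_map_measure hφ.aestronglyMeasurable (aemeasurable_VaR hX)).mp h1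

lemma integral_comp_VaR [IsProbabilityMeasure μ] (hX : Measurable X) {φ : ℝ → ℝ}
    (hφ : Measurable φ) :
    ∫ β in Ioo (0 : ℝ) 1, φ (VaR μ X β) = ∫ ω, φ (X ω) ∂μ := by
  have h1 : ∫ x, φ x ∂(μ.map X) = ∫ ω, φ (X ω) ∂μ :=
    integral_map hX.aemeasurable hφ.aestronglyMeasurable
  rw [← map_VaR hX] at h1
  rw [← h1, integral_map (aemeasurable_VaR hX) hφ.aestronglyMeasurable]

lemma D_pos {p α : ℝ} (hα0 : 0 < α) (hα1 : α < 1) :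
    0 < α ^ p * (1 - α) + (1 - α) ^ p * α := by
  have h2 : (0:ℝ) < 1 - α := by linarith
  have h3 : (0:ℝ) < α ^ p := Real.rpow_pos_of_pos hα0 p
  have h4 : (0:ℝ) < (1 - α) ^ p := Real.rpow_pos_of_pos h2 p
  positivity

/-- The key coefficient identity. -/
lemma coeff_eq {p α : ℝ} (hp : 1 < p) (hα0 : 0 < α) (hα1 : α < 1) :
    (α * (α * (1 - α) ^ (p - 1) / (α ^ p * (1 - α) + (1 - α) ^ p * α)) ^ (p / (p - 1))
      + (1 - α) * (α * α ^ (p - 1) / (α ^ p * (1 - α) + (1 - α) ^ p * α)) ^ (p / (p - 1)))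
        ^ (1 / (p / (p - 1)))
      = α * (α ^ p * (1 - α) + (1 - α) ^ p * α) ^ (-1 / p) := by
  set D := α ^ p * (1 - α) + (1 - α) ^ p * α with hD
  have ha2 : (0:ℝ) < 1 - α := by linarith
  have hDpos : 0 < D := D_pos hα0 hα1
  have hp0 : (0:ℝ) < p := by linarith
  have hp1 : (0:ℝ) < p - 1 := by linarith
  set q := p / (p - 1) with hq
  have hq0 : 0 < q := by positivity
  have hApos : (0:ℝ) < α ^ (p - 1) := Real.rpow_pos_of_pos hα0 _
  have hBpos : (0:ℝ) < (1 - α) ^ (p - 1) := Real.rpow_pos_of_pos ha2 _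
  have hAq : (α ^ (p - 1)) ^ q = α ^ p := by
    rw [← Real.rpow_mul hα0.le]
    congr 1
    rw [hq]
    field_simp
  have hBq : ((1 - α) ^ (p - 1)) ^ q = (1 - α) ^ p := by
    rw [← Real.rpow_mul ha2.le]
    congr 1
    rw [hq]
    field_simp
  have hfac1 : α * (1 - α) ^ (p - 1) / D = (α / D) * (1 - α) ^ (p - 1) := by ring
  have hfac2 : α * α ^ (p - 1) / D = (α / D) * α ^ (p - 1) := by ring
  have hαD : (0:ℝ) ≤ α / D := by positivity
  rw [hfac1, hfac2, Real.mul_rpow hαD hBpos.le, Real.mul_rpow hαD hApos.le, hAq, hBq]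
  have hsum : α * ((α / D) ^ q * (1 - α) ^ p) + (1 - α) * ((α / D) ^ q * α ^ p)
      = (α / D) ^ q * D := by
    rw [hD]; ring
  rw [hsum, Real.mul_rpow (by positivity) hDpos.le, ← Real.rpow_mul hαD,
    mul_one_div, div_self hq0.ne', Real.rpow_one]
  have hqinv : 1 / q = 1 - 1 / p := by
    rw [hq]
    field_simp
  have h1 : D ^ ((1:ℝ) - 1/p) = D * D ^ (-1/p) := by
    rw [sub_eq_add_neg, Real.rpow_add hDpos, Real.rpow_one, neg_div]
  rw [hqinv, h1]
  field_simp

lemma integral_piecewise_const [IsProbabilityMeasure μ]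
    {S : Set Ω} (hSm : MeasurableSet S) (a b : ℝ) :
    Integrable (S.piecewise (fun _ => a) (fun _ => b)) μ ∧
      ∫ ω, S.piecewise (fun _ => a) (fun _ => b) ω ∂μ
        = a * (μ S).toReal + b * (μ Sᶜ).toReal := by
  classical
  have hfun : S.piecewise (fun _ : Ω => a) (fun _ => b)
      = fun ω => S.indicator (fun _ => a) ω + Sᶜ.indicator (fun _ => b) ω := by
    funext ω
    by_cases h : ω ∈ S <;> simp [Set.piecewise, h]
  constructor
  · rw [hfun]
    exact ((integrable_const a).indicator hSm).add ((integrable_const b).indicator hSm.compl)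
  · rw [hfun, integral_add ((integrable_const a).indicator hSm)
      ((integrable_const b).indicator hSm.compl),
      integral_indicator_const _ hSm, integral_indicator_const _ hSm.compl,
      smul_eq_mul, smul_eq_mul]
    simp only [measureReal_def]
    ring

lemma exists_optimal [IsProbabilityMeasure μ] (hμ : Atomless μ) {p v α : ℝ} (m : ℝ)
    (hp : 1 < p) (hv : 0 ≤ v) (hα0 : 0 < α) (hα1 : α < 1) :
    ∃ X : Ω → ℝ, Measurable X ∧ Integrable X μ ∧ (∫ ω, X ω ∂μ) = m ∧
      Integrable (fun ω => |X ω - m| ^ p) μ ∧ (∫ ω, |X ω - m| ^ p ∂μ) ≤ v ^ p ∧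
      ES μ X α = m + v * α * (α ^ p * (1 - α) + (1 - α) ^ p * α) ^ (-1 / p) := by
  classical
  have ha2 : (0:ℝ) < 1 - α := by linarith
  have hp0 : (0:ℝ) < p := by linarith
  set D := α ^ p * (1 - α) + (1 - α) ^ p * α with hD
  have hDpos : 0 < D := D_pos hα0 hα1
  have hDrp : (0:ℝ) < D ^ (-1 / p) := Real.rpow_pos_of_pos hDpos _
  set t := v * α * D ^ (-1 / p) with ht
  have ht0 : 0 ≤ t := by
    rw [ht]; exact mul_nonneg (mul_nonneg hv hα0.le) hDrp.le
  set s := (1 - α) * t / α with hs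
  have hs0 : 0 ≤ s := by
    rw [hs]; exact div_nonneg (mul_nonneg ha2.le ht0) hα0.le
  obtain ⟨S, hSm, hSμ⟩ := atomless_exists_measure_eq hμ (r := ENNReal.ofReal (1 - α))
    (by rw [← ENNReal.ofReal_one]; exact ENNReal.ofReal_le_ofReal (by linarith))
  have hSc : μ Sᶜ = ENNReal.ofReal α := by
    rw [measure_compl hSm (measure_ne_top μ S), measure_univ, hSμ, ← ENNReal.ofReal_one,
      ← ENNReal.ofReal_sub 1 (by linarith : (0:ℝ) ≤ 1 - α)]
    norm_num
  have hStr : (μ S).toReal = 1 - α := by rw [hSμ, ENNReal.toReal_ofReal ha2.le]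
  have hSctr : (μ Sᶜ).toReal = α := by rw [hSc, ENNReal.toReal_ofReal hα0.le]
  set X : Ω → ℝ := S.piecewise (fun _ => m + t) (fun _ => m - s) with hX
  have hXm : Measurable X := Measurable.piecewise hSm measurable_const measurable_const
  obtain ⟨hXint, hXval⟩ := integral_piecewise_const (μ := μ) hSm (m + t) (m - s)
  have hmean : ∫ ω, X ω ∂μ = m := by
    rw [hX, hXval, hStr, hSctr, hs]
    field_simp
    ring
  have hXp : (fun ω => |X ω - m| ^ p) = S.piecewise (fun _ => t ^ p) (fun _ => s ^ p) := by
    funext ω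
    by_cases h : ω ∈ S
    · rw [hX]
      simp only [Set.piecewise_eq_of_mem _ _ _ h]
      rw [add_sub_cancel_left, abs_of_nonneg ht0]
    · rw [hX]
      simp only [Set.piecewise_eq_of_notMem _ _ _ h]
      have h1 : m - s - m = -s := by ring
      rw [h1, abs_neg, abs_of_nonneg hs0]
  obtain ⟨hXpint, hXpval⟩ := integral_piecewise_const (μ := μ) hSm (t ^ p) (s ^ p)
  have htp : t ^ p = v ^ p * α ^ p * D⁻¹ := by
    have h1 : (D ^ (-1 / p)) ^ p = D⁻¹ := by
      rw [← Real.rpow_mul hDpos.le, div_mul_cancel₀ _ hp0.ne', Real.rpow_neg_one]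
    rw [ht, Real.mul_rpow (mul_nonneg hv hα0.le) hDrp.le, Real.mul_rpow hv hα0.le, h1]
  have hsp : s ^ p = v ^ p * (1 - α) ^ p * D⁻¹ := by
    have hseq : s = ((1 - α) / α) * t := by rw [hs]; ring
    rw [hseq, Real.mul_rpow (div_nonneg ha2.le hα0.le) ht0,
      Real.div_rpow ha2.le hα0.le, htp]
    have hαp : (0:ℝ) < α ^ p := Real.rpow_pos_of_pos hα0 p
    field_simp
  have hmomeq : ∫ ω, |X ω - m| ^ p ∂μ = v ^ p := by
    rw [hXp, hXpval, hStr, hSctr, htp, hsp]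
    have : v ^ p * α ^ p * D⁻¹ * (1 - α) + v ^ p * (1 - α) ^ p * D⁻¹ * α
        = v ^ p * (D⁻¹ * D) := by rw [hD]; ring
    rw [this, inv_mul_cancel₀ hDpos.ne', mul_one]
  have hXle : ∀ ω, X ω ≤ m + t := by
    intro ω
    rw [hX]
    by_cases h : ω ∈ S
    · rw [Set.piecewise_eq_of_mem _ _ _ h]
    · rw [Set.piecewise_eq_of_notMem _ _ _ h]
      linarith
  have hVaR : ∀ β ∈ Ioo α (1:ℝ), VaR μ X β = m + t := by
    intro β hβ
    have hset : {u : ℝ | ENNReal.ofReal β ≤ μ {ω | X ω ≤ u}} = Ici (m + t) := by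
      ext u
      simp only [mem_setOf_eq, mem_Ici]
      constructor
      · intro h
        by_contra hu
        push_neg at hu
        have hsub : {ω | X ω ≤ u} ⊆ Sᶜ := by
          intro ω hω
          simp only [mem_compl_iff]
          intro hωS
          rw [mem_setOf_eq, hX, Set.piecewise_eq_of_mem _ _ _ hωS] at hω
          linarith
        have h2 := le_trans h (measure_mono hsub)
        rw [hSc] at h2
        have h3 : β ≤ α := (ENNReal.ofReal_le_ofReal_iff hα0.le).mp h2
        linarith [hβ.1]
      · intro hu
        have huniv : {ω | X ω ≤ u} = univ := by
          ext ω
          simp only [mem_setOf_eq, mem_univ, iff_true]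
          exact le_trans (hXle ω) hu
        rw [huniv, measure_univ]
        exact ENNReal.ofReal_le_one.mpr hβ.2.le
    rw [VaR, hset, csInf_Ici]
  have hES : ES μ X α = m + t := by
    rw [ES, setIntegral_congr_fun measurableSet_Ioo hVaR, setIntegral_const,
      Real.volume_real_Ioo, max_eq_left ha2.le, smul_eq_mul]
    field_simp
  refine ⟨X, hXm, hXint, hmean, ?_, le_of_eq hmomeq, ?_⟩
  · rw [hXp]; exact hXpint
  · rw [hES, ht]

lemma ES_le [IsProbabilityMeasure μ] {p m v α : ℝ}
    (hX : Measurable X) (hint : Integrable X μ) (hmean : (∫ ω, X ω ∂μ) = m)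
    (hmom_int : Integrable (fun ω => |X ω - m| ^ p) μ)
    (hmom : (∫ ω, |X ω - m| ^ p ∂μ) ≤ v ^ p)
    (hp : 1 < p) (hv : 0 ≤ v) (hα0 : 0 < α) (hα1 : α < 1) :
    ES μ X α ≤ m + v * α * (α ^ p * (1 - α) + (1 - α) ^ p * α) ^ (-1 / p) := by
  classical
  have ha2 : (0:ℝ) < 1 - α := by linarith
  have hp0 : (0:ℝ) < p := by linarith
  set D := α ^ p * (1 - α) + (1 - α) ^ p * α with hD
  have hDpos : 0 < D := D_pos hα0 hα1
  set q' := p / (p - 1) with hq'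
  have hpq : p.HolderConjugate q' := Real.HolderConjugate.conjExponent hp
  have hq'0 : 0 < q' := hpq.symm.pos
  have hApos : (0:ℝ) < α ^ (p - 1) := Real.rpow_pos_of_pos hα0 _
  have hBpos : (0:ℝ) < (1 - α) ^ (p - 1) := Real.rpow_pos_of_pos ha2 _
  set c₂ := α * (1 - α) ^ (p - 1) / D with hc₂
  set cA := α * α ^ (p - 1) / D with hcA
  have hc₂pos : 0 < c₂ := by rw [hc₂]; positivity
  have hcApos : 0 < cA := by rw [hcA]; positivity
  have hABD : D = α * (1 - α) ^ (p - 1) * (1 - α) + (1 - α) * α ^ (p - 1) * α := by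
    have hA : α ^ (p - 1) * α = α ^ p := by
      rw [← Real.rpow_add_one hα0.ne' (p - 1), sub_add_cancel]
    have hB : (1 - α) ^ (p - 1) * (1 - α) = (1 - α) ^ p := by
      rw [← Real.rpow_add_one ha2.ne' (p - 1), sub_add_cancel]
    rw [hD, ← hA, ← hB]; ring
  have hc₁sub : (1 - α)⁻¹ - c₂ = cA := by
    rw [hc₂, hcA]
    field_simp
    nlinarith [hABD]
  -- finite measure instance
  haveI hfinν : IsFiniteMeasure (volume.restrict (Ioo (0:ℝ) 1)) := by
    constructor
    rw [Measure.restrict_apply_univ, Real.volume_Ioo]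
    exact ENNReal.ofReal_lt_top
  set f : ℝ → ℝ := fun β => VaR μ X β - m with hf
  have hφ1 : Measurable fun x : ℝ => x - m := measurable_id.sub measurable_const
  have hfint : IntegrableOn f (Ioo (0:ℝ) 1) :=
    integrableOn_comp_VaR hX hφ1 (hint.sub (integrable_const m))
  have hfzero : ∫ β in Ioo (0:ℝ) 1, f β = 0 := by
    have h1 := integral_comp_VaR (μ := μ) hX hφ1
    rw [hf]
    rw [h1, integral_sub hint (integrable_const m), hmean, integral_const]
    simp
  have hfm : AEStronglyMeasurable f (volume.restrict (Ioo (0:ℝ) 1)) :=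
    ((aemeasurable_VaR hX).sub aemeasurable_const).aestronglyMeasurable
  have hφp : Measurable fun x : ℝ => |x - m| ^ p :=
    (((continuous_id.sub continuous_const).abs).rpow_const fun x => Or.inr hp0.le).measurable
  have hpint : IntegrableOn (fun β => |VaR μ X β - m| ^ p) (Ioo (0:ℝ) 1) := by
    have h := integrableOn_comp_VaR hX hφp hmom_int
    exact h
  have hpval : ∫ β in Ioo (0:ℝ) 1, |VaR μ X β - m| ^ p ≤ v ^ p := by
    rw [integral_comp_VaR hX hφp]
    exact hmom
  have hpne : ENNReal.ofReal p ≠ 0 := by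
    rw [Ne, ENNReal.ofReal_eq_zero, not_le]; exact hp0
  have hq'ne : ENNReal.ofReal q' ≠ 0 := by
    rw [Ne, ENNReal.ofReal_eq_zero, not_le]; exact hq'0
  have hfLp : MemLp f (ENNReal.ofReal p) (volume.restrict (Ioo (0:ℝ) 1)) := by
    have hiff := memLp_norm_rpow_iff (p := ENNReal.ofReal p) (q := ENNReal.ofReal p)
      (μ := volume.restrict (Ioo (0:ℝ) 1)) hfm hpne ENNReal.ofReal_ne_top
    rw [ENNReal.div_self hpne ENNReal.ofReal_ne_top] at hiff
    rw [← hiff, memLp_one_iff_integrable]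
    have heq : (fun x => ‖f x‖ ^ (ENNReal.ofReal p).toReal)
        = fun β => |VaR μ X β - m| ^ p := by
      funext x
      rw [ENNReal.toReal_ofReal hp0.le, Real.norm_eq_abs]
    rw [heq]
    exact hpint
  set g : ℝ → ℝ := fun β => (Ioo α 1).indicator (fun _ => (1 - α)⁻¹) β - c₂ with hg
  have hgLp : MemLp g (ENNReal.ofReal q') (volume.restrict (Ioo (0:ℝ) 1)) :=
    MemLp.sub (MemLp.indicator measurableSet_Ioo (memLp_const _)) (memLp_const _)
  -- pointwise values of g
  have hgval1 : ∀ β ∈ Ioc (0:ℝ) α, g β = -c₂ := by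
    intro β hβ
    have : β ∉ Ioo α 1 := fun h => absurd hβ.2 (not_le.mpr h.1)
    simp [hg, indicator_of_notMem this]
  have hgval2 : ∀ β ∈ Ioo α (1:ℝ), g β = cA := by
    intro β hβ
    rw [hg]
    simp only [indicator_of_mem hβ]
    exact hc₁sub
  -- compute ∫ ‖g‖ ^ q'
  have hsplit : Ioc (0:ℝ) α ∪ Ioo α 1 = Ioo 0 1 := Ioc_union_Ioo_eq_Ioo hα0.le hα1
  have hdisj : Disjoint (Ioc (0:ℝ) α) (Ioo α 1) := by
    rw [Set.disjoint_left]
    intro β h1 h2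
    exact absurd h1.2 (not_le.mpr h2.1)
  have hEq1 : EqOn (fun _ : ℝ => c₂ ^ q') (fun β => ‖g β‖ ^ q') (Ioc 0 α) := by
    intro β hβ
    simp only
    rw [hgval1 β hβ, norm_neg, Real.norm_eq_abs, abs_of_pos hc₂pos]
  have hEq2 : EqOn (fun _ : ℝ => cA ^ q') (fun β => ‖g β‖ ^ q') (Ioo α 1) := by
    intro β hβ
    simp only
    rw [hgval2 β hβ, Real.norm_eq_abs, abs_of_pos hcApos]
  have hF1 : IntegrableOn (fun β => ‖g β‖ ^ q') (Ioc (0:ℝ) α) := by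
    apply IntegrableOn.congr_fun _ hEq1 measurableSet_Ioc
    exact integrableOn_const (by rw [Real.volume_Ioc]; exact ENNReal.ofReal_ne_top)
  have hF2 : IntegrableOn (fun β => ‖g β‖ ^ q') (Ioo α (1:ℝ)) := by
    apply IntegrableOn.congr_fun _ hEq2 measurableSet_Ioo
    exact integrableOn_const (by rw [Real.volume_Ioo]; exact ENNReal.ofReal_ne_top)
  have hgq : ∫ β in Ioo (0:ℝ) 1, ‖g β‖ ^ q' = α * c₂ ^ q' + (1 - α) * cA ^ q' := by
    rw [← hsplit, setIntegral_union hdisj measurableSet_Ioo hF1 hF2]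
    rw [← setIntegral_congr_fun measurableSet_Ioc hEq1,
      ← setIntegral_congr_fun measurableSet_Ioo hEq2]
    rw [setIntegral_const, setIntegral_const, Real.volume_real_Ioc, Real.volume_real_Ioo,
      sub_zero, max_eq_left hα0.le, max_eq_left ha2.le]
    simp [smul_eq_mul]
  -- Hölder
  have hhold := integral_mul_norm_le_Lp_mul_Lq (μ := volume.restrict (Ioo (0:ℝ) 1)) hpq hfLp hgLp
  -- pointwise product decomposition
  have hprod : ∀ β, f β * g β
      = (Ioo α 1).indicator (fun β' => f β' * (1 - α)⁻¹) β - c₂ * f β := by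
    intro β
    by_cases hβ : β ∈ Ioo α (1:ℝ)
    · simp only [hg, indicator_of_mem hβ]
      ring
    · simp only [hg, indicator_of_notMem hβ]
      ring
  have hint1 : Integrable ((Ioo α 1).indicator fun β => f β * (1 - α)⁻¹)
      (volume.restrict (Ioo (0:ℝ) 1)) :=
    (hfint.mul_const _).indicator measurableSet_Ioo
  have hint2 : Integrable (fun β => c₂ * f β) (volume.restrict (Ioo (0:ℝ) 1)) :=
    hfint.const_mul c₂
  have hfgint : Integrable (fun β => f β * g β) (volume.restrict (Ioo (0:ℝ) 1)) := by
    have heq : (fun β => f β * g β)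
        = fun β => (Ioo α 1).indicator (fun β' => f β' * (1 - α)⁻¹) β - c₂ * f β :=
      funext hprod
    rw [heq]
    exact hint1.sub hint2
  have habs_int : Integrable (fun β => ‖f β‖ * ‖g β‖) (volume.restrict (Ioo (0:ℝ) 1)) := by
    have heq : (fun β => ‖f β‖ * ‖g β‖) = fun β => |f β * g β| := by
      funext β
      rw [Real.norm_eq_abs, Real.norm_eq_abs, abs_mul]
    rw [heq]
    exact hfgint.abs
  have hmono2 : ∫ β in Ioo (0:ℝ) 1, f β * g β ≤ ∫ β in Ioo (0:ℝ) 1, ‖f β‖ * ‖g β‖ := by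
    apply integral_mono hfgint habs_int
    intro β
    show f β * g β ≤ ‖f β‖ * ‖g β‖
    rw [Real.norm_eq_abs, Real.norm_eq_abs, ← abs_mul]
    exact le_abs_self _
  -- the identity
  have hIoo_sub : Ioo α (1:ℝ) ⊆ Ioo 0 1 := fun β hβ => ⟨lt_trans hα0 hβ.1, hβ.2⟩
  have hid : ∫ β in Ioo (0:ℝ) 1, f β * g β = (1 - α)⁻¹ * ∫ β in Ioo α 1, f β := by
    have heq : (fun β => f β * g β)
        = fun β => (Ioo α 1).indicator (fun β' => f β' * (1 - α)⁻¹) β - c₂ * f β :=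
      funext hprod
    rw [heq, integral_sub hint1 hint2, integral_const_mul, hfzero, mul_zero, sub_zero,
      setIntegral_indicator measurableSet_Ioo, inter_eq_self_of_subset_right hIoo_sub,
      integral_mul_const]
    ring
  -- ES value
  have hfintα : IntegrableOn f (Ioo α 1) := hfint.mono_set hIoo_sub
  have hES : ES μ X α = m + (1 - α)⁻¹ * ∫ β in Ioo α 1, f β := by
    rw [ES]
    have h1 : ∫ β in Ioo α (1:ℝ), VaR μ X β = (∫ β in Ioo α 1, f β) + (1 - α) * m := by
      have h2 : ∫ β in Ioo α (1:ℝ), VaR μ X β = ∫ β in Ioo α 1, (f β + m) := by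
        congr 1
        funext β
        rw [hf]
        ring
      rw [h2, integral_add hfintα (integrable_const m), setIntegral_const, Real.volume_real_Ioo,
        max_eq_left ha2.le, smul_eq_mul]
    rw [h1]
    field_simp
    ring
  -- final bounds
  have hfactor1 : (∫ β in Ioo (0:ℝ) 1, ‖f β‖ ^ p) ^ (1 / p) ≤ v := by
    have heq : ∫ β in Ioo (0:ℝ) 1, ‖f β‖ ^ p
        = ∫ β in Ioo (0:ℝ) 1, |VaR μ X β - m| ^ p := by
      simp only [Real.norm_eq_abs, hf]
    rw [heq]
    calc (∫ β in Ioo (0:ℝ) 1, |VaR μ X β - m| ^ p) ^ (1 / p)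
        ≤ (v ^ p) ^ (1 / p) := by
          apply Real.rpow_le_rpow _ hpval (by positivity)
          exact integral_nonneg fun β => Real.rpow_nonneg (abs_nonneg _) _
      _ = v := by
          rw [← Real.rpow_mul hv, mul_one_div, div_self hp0.ne', Real.rpow_one]
  have hfactor2 : (∫ β in Ioo (0:ℝ) 1, ‖g β‖ ^ q') ^ (1 / q') = α * D ^ (-1 / p) := by
    rw [hgq, hc₂, hcA, hq', hD]
    exact coeff_eq hp hα0 hα1
  have hnonneg2 : 0 ≤ (∫ β in Ioo (0:ℝ) 1, ‖g β‖ ^ q') ^ (1 / q') := by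
    apply Real.rpow_nonneg
    exact integral_nonneg fun β => Real.rpow_nonneg (norm_nonneg _) _
  have hchain : (1 - α)⁻¹ * ∫ β in Ioo α 1, f β ≤ v * (α * D ^ (-1 / p)) := by
    rw [← hid]
    calc ∫ β in Ioo (0:ℝ) 1, f β * g β
        ≤ ∫ β in Ioo (0:ℝ) 1, ‖f β‖ * ‖g β‖ := hmono2
      _ ≤ (∫ β in Ioo (0:ℝ) 1, ‖f β‖ ^ p) ^ (1/p)
            * (∫ β in Ioo (0:ℝ) 1, ‖g β‖ ^ q') ^ (1/q') := hhold
      _ ≤ v * (α * D ^ (-1 / p)) := by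
          rw [← hfactor2]
          exact mul_le_mul_of_nonneg_right hfactor1 hnonneg2
  rw [hES]
  have hre : v * (α * D ^ (-1/p)) = v * α * D ^ (-1/p) := by ring
  linarith [hchain]

end WCES

/-- **Worst-case Expected Shortfall under moment uncertainty.** For `p > 1`, `m ∈ ℝ`,
`v ≥ 0` and `α ∈ (0,1)`, the supremum of `ES_α(X)` over the moment uncertainty set
`L^p(m, v)` equals `m + v α (α^p (1-α) + (1-α)^p α)^{-1/p}`. -/
theorem worst_case_ES_moment {Ω : Type*} [MeasurableSpace Ω] (μ : Measure Ω)
    [IsProbabilityMeasure μ] (hμ : Atomless μ)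
    (p m v α : ℝ) (hp : 1 < p) (hv : 0 ≤ v) (hα : α ∈ Set.Ioo (0 : ℝ) 1) :
    sSup {y : ℝ | ∃ X : Ω → ℝ, Measurable X ∧ Integrable X μ ∧ (∫ ω, X ω ∂μ) = m ∧
        Integrable (fun ω => |X ω - m| ^ p) μ ∧ (∫ ω, |X ω - m| ^ p ∂μ) ≤ v ^ p ∧
        y = ES μ X α}
      = m + v * α * (α ^ p * (1 - α) + (1 - α) ^ p * α) ^ (-1 / p) := by
  obtain ⟨hα0, hα1⟩ := hα
  obtain ⟨X₀, hX₀m, hX₀i, hX₀mean, hX₀pi, hX₀mom, hX₀ES⟩ :=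
    WCES.exists_optimal (μ := μ) hμ m hp hv hα0 hα1
  have hub : ∀ y ∈ {y : ℝ | ∃ X : Ω → ℝ, Measurable X ∧ Integrable X μ ∧ (∫ ω, X ω ∂μ) = m ∧
      Integrable (fun ω => |X ω - m| ^ p) μ ∧ (∫ ω, |X ω - m| ^ p ∂μ) ≤ v ^ p ∧
      y = ES μ X α},
      y ≤ m + v * α * (α ^ p * (1 - α) + (1 - α) ^ p * α) ^ (-1 / p) := by
    rintro y ⟨X, h1, h2, h3, h4, h5, rfl⟩
    exact WCES.ES_le h1 h2 h3 h4 h5 hp hv hα0 hα1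
  have hmem : (m + v * α * (α ^ p * (1 - α) + (1 - α) ^ p * α) ^ (-1 / p)) ∈
      {y : ℝ | ∃ X : Ω → ℝ, Measurable X ∧ Integrable X μ ∧ (∫ ω, X ω ∂μ) = m ∧
      Integrable (fun ω => |X ω - m| ^ p) μ ∧ (∫ ω, |X ω - m| ^ p ∂μ) ≤ v ^ p ∧
      y = ES μ X α} :=
    ⟨X₀, hX₀m, hX₀i, hX₀mean, hX₀pi, hX₀mom, hX₀ES.symm⟩
  apply le_antisymm
  · exact csSup_le ⟨_, hmem⟩ hub
  · exact le_csSup ⟨_, hub⟩ hmem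
end

section
/- Let v : ℝ → ℝ be increasing and convex with v(0) = 0, with v̄ := sup over x ∈ ℝ of the right derivative v'_+(x) satisfying v̄ ≥ 1 (v̄ may be +∞), and with v'_+(−t) → 0 as t → +∞. Then for every essentially bounded random variable X and every t ∈ ℝ, E[v(X − t)] = sup over β ∈ (0, v̄] of { β·( R^v_β(X) − t ) }, where R^v_β(X) = inf over s ∈ ℝ of { s + (1/β)·E[v(X − s)] } and the convention 1/∞ = 0 is used. -/
open MeasureTheory Set Filter

/-- The right derivative of a convex function `v` at `x`, as the infimum of slopes to the
right of `x`. -/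
noncomputable def rightDeriv (v : ℝ → ℝ) (x : ℝ) : ℝ :=
  sInf ((fun y => (v y - v x) / (y - x)) '' Set.Ioi x)

/-- `v̄ = sup_{x ∈ ℝ} v'_+(x)`, valued in `[0, ∞]`. -/
noncomputable def slopeSup (v : ℝ → ℝ) : ENNReal :=
  ⨆ x : ℝ, ENNReal.ofReal (rightDeriv v x)

/-- The optimized certainty equivalent `R^v_β(X) = inf_{s ∈ ℝ} { s + (1/β) E[v(X - s)] }`,
for `β ∈ (0, ∞]`, valued in the extended reals. The convention `1/∞ = 0` is built in via
`(β⁻¹).toReal`. -/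
noncomputable def OCE {Ω : Type*} [MeasurableSpace Ω] (μ : Measure Ω) (X : Ω → ℝ)
    (v : ℝ → ℝ) (β : ENNReal) : EReal :=
  sInf {y : EReal | ∃ s : ℝ, y = ((s + (β⁻¹).toReal * ∫ ω, v (X ω - s) ∂μ : ℝ) : EReal)}

section Aux

variable {f : ℝ → ℝ}

lemma slopeSet_nonempty (f : ℝ → ℝ) (x : ℝ) :
    ((fun y => (f y - f x) / (y - x)) '' Set.Ioi x).Nonempty :=
  ⟨_, ⟨x + 1, by simp, rfl⟩⟩

lemma slopeSet_bddBelow (hf : ConvexOn ℝ Set.univ f) (x : ℝ) :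
    BddBelow ((fun y => (f y - f x) / (y - x)) '' Set.Ioi x) := by
  refine ⟨(f x - f (x - 1)) / (x - (x - 1)), ?_⟩
  rintro z ⟨y, hy, rfl⟩
  exact hf.slope_mono_adjacent trivial trivial (by linarith) hy

lemma rightDeriv_le_slope (hf : ConvexOn ℝ Set.univ f) {x y : ℝ} (hxy : x < y) :
    rightDeriv f x ≤ (f y - f x) / (y - x) :=
  csInf_le (slopeSet_bddBelow hf x) ⟨y, hxy, rfl⟩

lemma slope_le_rightDeriv (hf : ConvexOn ℝ Set.univ f) {x y : ℝ} (hxy : x < y) :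
    (f y - f x) / (y - x) ≤ rightDeriv f y := by
  apply le_csInf (slopeSet_nonempty f y)
  rintro z ⟨w, hw, rfl⟩
  exact hf.slope_mono_adjacent trivial trivial hxy hw

lemma rightDeriv_nonneg (hm : Monotone f) (hf : ConvexOn ℝ Set.univ f) (x : ℝ) :
    0 ≤ rightDeriv f x := by
  apply le_csInf (slopeSet_nonempty f x)
  rintro z ⟨y, (hy : x < y), rfl⟩
  exact div_nonneg (sub_nonneg.2 (hm hy.le)) (by linarith)

lemma rightDeriv_subgradient (hf : ConvexOn ℝ Set.univ f) (t s : ℝ) :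
    f t + rightDeriv f t * (s - t) ≤ f s := by
  rcases lt_trichotomy s t with h | rfl | h
  · have h1 : (f t - f s) / (t - s) ≤ rightDeriv f t := slope_le_rightDeriv hf h
    rw [div_le_iff₀ (by linarith : (0:ℝ) < t - s)] at h1
    nlinarith
  · simp
  · have h1 := rightDeriv_le_slope hf h
    rw [le_div_iff₀ (by linarith : (0:ℝ) < s - t)] at h1
    linarith

lemma slope_ge_of_right (hf : ConvexOn ℝ Set.univ f) {x0 p q : ℝ} (hp : x0 ≤ p) (hpq : p ≤ q) :
    rightDeriv f x0 * (q - p) ≤ f q - f p := by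
  rcases eq_or_lt_of_le hpq with rfl | hpq
  · simp
  rcases eq_or_lt_of_le hp with rfl | hp
  · have h1 := rightDeriv_le_slope hf hpq
    rw [le_div_iff₀ (by linarith : (0:ℝ) < q - x0)] at h1
    linarith
  · have h1 : (f q - f x0) / (q - x0) ≤ (f q - f p) / (q - p) :=
      hf.secant_mono_aux3 trivial trivial hp hpq
    have h2 := (rightDeriv_le_slope hf (hp.trans hpq)).trans h1
    rw [le_div_iff₀ (by linarith : (0:ℝ) < q - p)] at h2
    linarith

lemma slope_le_of_bound (hf : ConvexOn ℝ Set.univ f) {M a b : ℝ}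
    (hM : ∀ x, rightDeriv f x ≤ M) (hab : b ≤ a) : f a - f b ≤ M * (a - b) := by
  rcases eq_or_lt_of_le hab with rfl | h
  · simp
  have h1 := (slope_le_rightDeriv hf h).trans (hM a)
  rw [div_le_iff₀ (by linarith : (0:ℝ) < a - b)] at h1
  linarith

end Aux

/-- **Reverse OCE optimization formula.** Let `v` be increasing and convex with `v(0) = 0`,
`v̄ = sup v'_+ ≥ 1` (possibly `+∞`) and `v'_+(-t) → 0` as `t → ∞`. Then for every essentially
bounded random variable `X` and every `t ∈ ℝ`,
`E[v(X - t)] = sup over β ∈ (0, v̄] of β (R^v_β(X) - t)`, in the extended reals. -/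
theorem reverse_OCE_optimization {Ω : Type*} [MeasurableSpace Ω] (μ : Measure Ω)
    [IsProbabilityMeasure μ] (hμ : Atomless μ)
    (v : ℝ → ℝ) (hv_mono : Monotone v) (hv_conv : ConvexOn ℝ Set.univ v) (hv0 : v 0 = 0)
    (hvbar : 1 ≤ slopeSup v)
    (hvlim : Tendsto (fun s : ℝ => rightDeriv v (-s)) atTop (nhds 0))
    (X : Ω → ℝ) (hXmeas : Measurable X) (hXbdd : MemLp X ⊤ μ) (t : ℝ) :
    ((∫ ω, v (X ω - t) ∂μ : ℝ) : EReal)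
      = sSup {y : EReal | ∃ β : ENNReal, 0 < β ∧ β ≤ slopeSup v ∧
          y = (β : EReal) * (OCE μ X v β - (t : ℝ))} := by
  classical
  -- essential bound on X
  obtain ⟨C, hC⟩ : ∃ C : ℝ, ∀ᵐ ω ∂μ, |X ω| ≤ C := by
    refine ⟨(eLpNormEssSup X μ).toReal, ?_⟩
    have hfin : eLpNormEssSup X μ < ⊤ := by
      have := hXbdd.2; rwa [eLpNorm_exponent_top] at this
    filter_upwards [ae_le_eLpNormEssSup (f := X) (μ := μ)] with ω hω
    have h1 : ((‖X ω‖₊ : ENNReal)).toReal ≤ (eLpNormEssSup X μ).toReal :=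
      ENNReal.toReal_mono hfin.ne hω
    simpa [Real.norm_eq_abs] using h1
  set g : ℝ → ℝ := fun s => ∫ ω, v (X ω - s) ∂μ with hg
  have hgdef : ∀ s, g s = ∫ ω, v (X ω - s) ∂μ := fun s => by rw [hg]
  -- integrability
  have hmeas : ∀ s : ℝ, AEStronglyMeasurable (fun ω => v (X ω - s)) μ :=
    fun s => (hv_mono.measurable.comp (hXmeas.sub_const s)).aestronglyMeasurable
  have hInt : ∀ s : ℝ, Integrable (fun ω => v (X ω - s)) μ := by
    intro s
    refine Integrable.mono' (integrable_const (max |v (C - s)| |v (-C - s)|)) (hmeas s) ?_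
    filter_upwards [hC] with ω hω
    have hω' := abs_le.1 hω
    have hl : v (-C - s) ≤ v (X ω - s) := hv_mono (by linarith [hω'.1])
    have hu : v (X ω - s) ≤ v (C - s) := hv_mono (by linarith [hω'.2])
    rw [Real.norm_eq_abs, abs_le]
    constructor
    · have := neg_abs_le (v (-C - s))
      have := le_max_right |v (C - s)| |v (-C - s)|
      linarith
    · have := le_abs_self (v (C - s))
      have := le_max_left |v (C - s)| |v (-C - s)|
      linarith
  have hg_anti : ∀ {s s' : ℝ}, s ≤ s' → g s' ≤ g s := by
    intro s s' h
    rw [hgdef s, hgdef s']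
    exact integral_mono (hInt s') (hInt s) fun ω => hv_mono (by linarith)
  have hg_conv : ConvexOn ℝ Set.univ g := by
    refine ⟨convex_univ, ?_⟩
    intro x _ y _ a b ha hb hab
    simp only [smul_eq_mul]
    have key : ∀ ω, v (X ω - (a * x + b * y)) ≤ a * v (X ω - x) + b * v (X ω - y) := by
      intro ω
      have harg : X ω - (a * x + b * y) = a * (X ω - x) + b * (X ω - y) := by
        linear_combination (-(X ω)) * hab
      rw [harg]
      have := hv_conv.2 (Set.mem_univ (X ω - x)) (Set.mem_univ (X ω - y)) ha hb hab
      simpa [smul_eq_mul] using this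
    calc g (a * x + b * y) = ∫ ω, v (X ω - (a * x + b * y)) ∂μ := hgdef _
      _ ≤ ∫ ω, (a * v (X ω - x) + b * v (X ω - y)) ∂μ :=
          integral_mono (hInt _) (((hInt x).const_mul a).add ((hInt y).const_mul b)) key
      _ = a * g x + b * g y := by
          rw [integral_add ((hInt x).const_mul a) ((hInt y).const_mul b),
            integral_const_mul, integral_const_mul, hgdef x, hgdef y]
  rw [← hgdef t]
  refine le_antisymm ?_ ?_
  · -- Part B : g t ≤ sSup
    by_cases hrd : rightDeriv g t < 0
    · -- Case 1: subgradient β* = - g'_+(t) > 0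
      set b := -(rightDeriv g t) with hbdef
      have hbpos : 0 < b := by simp only [hbdef]; linarith
      have hrdb : rightDeriv g t = -b := by rw [hbdef]; ring
      have hsub : ∀ s, b * t + g t ≤ b * s + g s := by
        intro s
        have h := rightDeriv_subgradient hg_conv t s
        rw [hrdb] at h
        nlinarith [h]
      have hβle : ENNReal.ofReal b ≤ slopeSup v := by
        rcases eq_or_ne (slopeSup v) ⊤ with h | h
        · rw [h]; exact le_top
        · set M := (slopeSup v).toReal with hM
          have hvM : ∀ x, rightDeriv v x ≤ M := by
            intro x
            have h1 : ENNReal.ofReal (rightDeriv v x) ≤ slopeSup v := by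
              unfold slopeSup; exact le_iSup (fun z : ℝ => ENNReal.ofReal (rightDeriv v z)) x
            have h2 := ENNReal.toReal_mono h h1
            rwa [ENNReal.toReal_ofReal (rightDeriv_nonneg hv_mono hv_conv x)] at h2
          have hgM : -M ≤ rightDeriv g t := by
            apply le_csInf (slopeSet_nonempty g t)
            rintro z ⟨s, (hs : t < s), rfl⟩
            rw [le_div_iff₀ (by linarith : (0:ℝ) < s - t)]
            have hint : g t - g s ≤ M * (s - t) := by
              have h0 : ∫ ω, (v (X ω - t) - v (X ω - s)) ∂μ ≤ ∫ _ω, M * (s - t) ∂μ := by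
                refine integral_mono ((hInt t).sub (hInt s)) (integrable_const _) fun ω => ?_
                have h3 := slope_le_of_bound hv_conv hvM
                  (show X ω - s ≤ X ω - t by linarith)
                have harg : (X ω - t) - (X ω - s) = s - t := by ring
                rw [harg] at h3
                exact h3
              rwa [integral_sub (hInt t) (hInt s), integral_const, probReal_univ,
                one_smul, ← hgdef t, ← hgdef s] at h0
            nlinarith
          have hbM : b ≤ M := by rw [hbdef]; linarith
          calc ENNReal.ofReal b ≤ ENNReal.ofReal M := ENNReal.ofReal_le_ofReal hbM
            _ = slopeSup v := ENNReal.ofReal_toReal h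
      have hinv : ((ENNReal.ofReal b)⁻¹).toReal = b⁻¹ := by
        rw [ENNReal.toReal_inv, ENNReal.toReal_ofReal hbpos.le]
      have hup : OCE μ X v (ENNReal.ofReal b) ≤ ((t + b⁻¹ * g t : ℝ) : EReal) := by
        unfold OCE
        refine sInf_le ⟨t, ?_⟩
        rw [hinv, hgdef t]
      have hlow : ((t + b⁻¹ * g t : ℝ) : EReal) ≤ OCE μ X v (ENNReal.ofReal b) := by
        unfold OCE
        apply le_sInf
        rintro y ⟨s, rfl⟩
        rw [hinv, ← hgdef s, EReal.coe_le_coe_iff]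
        have h2 : b⁻¹ * (b * t + g t) ≤ b⁻¹ * (b * s + g s) :=
          mul_le_mul_of_nonneg_left (hsub s) (by positivity)
        have h3 : b⁻¹ * (b * t + g t) = t + b⁻¹ * g t := by field_simp
        have h4 : b⁻¹ * (b * s + g s) = s + b⁻¹ * g s := by field_simp
        rw [h3, h4] at h2
        exact h2
      have hOCE : OCE μ X v (ENNReal.ofReal b) = ((t + b⁻¹ * g t : ℝ) : EReal) :=
        le_antisymm hup hlow
      apply le_sSup
      refine ⟨ENNReal.ofReal b, ENNReal.ofReal_pos.2 hbpos, hβle, ?_⟩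
      rw [hOCE]
      have hco : ((ENNReal.ofReal b : ENNReal) : EReal) = ((b : ℝ) : EReal) := by
        rw [EReal.coe_ennreal_ofReal, max_eq_left hbpos.le]
      rw [hco, ← EReal.coe_sub, ← EReal.coe_mul]
      congr 1
      field_simp
      ring
    · -- Case 2: g'_+(t) ≥ 0, take β → 0
      push_neg at hrd
      have hconst : ∀ s, t ≤ s → g s = g t := by
        intro s hs
        rcases eq_or_lt_of_le hs with rfl | hs'
        · rfl
        refine le_antisymm (hg_anti hs) ?_
        have h1 : rightDeriv g t ≤ (g s - g t) / (s - t) := rightDeriv_le_slope hg_conv hs'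
        have h2 : (0:ℝ) ≤ (g s - g t) / (s - t) := hrd.trans h1
        rw [le_div_iff₀ (by linarith : (0:ℝ) < s - t)] at h2
        linarith
      obtain ⟨x0, hx0⟩ : ∃ x0 : ℝ, (1:ℝ)/2 < rightDeriv v x0 := by
        have h05 : (ENNReal.ofReal (1/2) : ENNReal) < slopeSup v :=
          lt_of_lt_of_le (ENNReal.ofReal_lt_one.2 (by norm_num)) hvbar
        unfold slopeSup at h05; rw [lt_iSup_iff] at h05
        obtain ⟨x0, hx0⟩ := h05
        refine ⟨x0, ?_⟩
        by_contra h
        push_neg at h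
        exact absurd (ENNReal.ofReal_le_ofReal h) (not_le.2 hx0)
      set c := rightDeriv v x0 with hc
      have hcpos : 0 < c := by linarith
      set s1 := min t (-C - x0) with hs1
      have hs1t : s1 ≤ t := min_le_left _ _
      have hgrow : ∀ s, s ≤ s1 → c * (s1 - s) ≤ g s - g s1 := by
        intro s hs
        have hpt : ∀ᵐ ω ∂μ, c * (s1 - s) ≤ v (X ω - s) - v (X ω - s1) := by
          filter_upwards [hC] with ω hω
          have h2 : -C ≤ X ω := (abs_le.1 hω).1
          have h1 : x0 ≤ X ω - s1 := by
            have h3 : s1 ≤ -C - x0 := min_le_right _ _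
            linarith
          have h3 : X ω - s1 ≤ X ω - s := by linarith
          have h4 := slope_ge_of_right hv_conv h1 h3
          have harg : (X ω - s) - (X ω - s1) = s1 - s := by ring
          rw [harg] at h4
          exact h4
        have h0 : ∫ _ω, c * (s1 - s) ∂μ ≤ ∫ ω, (v (X ω - s) - v (X ω - s1)) ∂μ :=
          integral_mono_ae (integrable_const _) ((hInt s).sub (hInt s1)) hpt
        rwa [integral_const, probReal_univ, one_smul,
          integral_sub (hInt s) (hInt s1), ← hgdef s, ← hgdef s1] at h0
      have hmain : ∀ b : ℝ, 0 < b → b ≤ c → b ≤ 1 →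
          ((b * (s1 - t) + g t : ℝ) : EReal) ≤ sSup {y : EReal | ∃ β : ENNReal, 0 < β ∧
            β ≤ slopeSup v ∧ y = (β : EReal) * (OCE μ X v β - (t : ℝ))} := by
        intro b hb0 hbc hb1
        have hβpos : (0 : ENNReal) < ENNReal.ofReal b := ENNReal.ofReal_pos.2 hb0
        have hβle : ENNReal.ofReal b ≤ slopeSup v :=
          le_trans (ENNReal.ofReal_le_one.2 hb1) hvbar
        have hinv : ((ENNReal.ofReal b)⁻¹).toReal = b⁻¹ := by
          rw [ENNReal.toReal_inv, ENNReal.toReal_ofReal hb0.le]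
        have hlow : ((s1 + b⁻¹ * g t : ℝ) : EReal) ≤ OCE μ X v (ENNReal.ofReal b) := by
          unfold OCE
          apply le_sInf
          rintro y ⟨s, rfl⟩
          rw [hinv, ← hgdef s, EReal.coe_le_coe_iff]
          rcases le_total s s1 with h | h
          · have h1 := hgrow s h
            have h2 : g t ≤ g s1 := hg_anti hs1t
            have h3 : g t + b * (s1 - s) ≤ g s := by nlinarith
            have h4 : b⁻¹ * (g t + b * (s1 - s)) ≤ b⁻¹ * g s :=
              mul_le_mul_of_nonneg_left h3 (by positivity)
            have h5 : b⁻¹ * (g t + b * (s1 - s)) = b⁻¹ * g t + (s1 - s) := by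
              field_simp
            rw [h5] at h4
            linarith
          · rcases le_total s t with h' | h'
            · have h2 : g t ≤ g s := hg_anti h'
              have h3 : b⁻¹ * g t ≤ b⁻¹ * g s :=
                mul_le_mul_of_nonneg_left h2 (by positivity)
              linarith
            · rw [hconst s h']
              linarith [hs1t.trans h']
        have hup : OCE μ X v (ENNReal.ofReal b) ≤ ((t + b⁻¹ * g t : ℝ) : EReal) := by
          unfold OCE
          refine sInf_le ⟨t, ?_⟩
          rw [hinv, hgdef t]
        have hne_top : OCE μ X v (ENNReal.ofReal b) ≠ ⊤ :=
          ne_top_of_le_ne_top (EReal.coe_ne_top _) hup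
        have hne_bot : OCE μ X v (ENNReal.ofReal b) ≠ ⊥ := by
          intro h
          rw [h] at hlow
          exact EReal.coe_ne_bot _ (le_bot_iff.1 hlow)
        set r := (OCE μ X v (ENNReal.ofReal b)).toReal with hrdef
        have hr : ((r : ℝ) : EReal) = OCE μ X v (ENNReal.ofReal b) :=
          EReal.coe_toReal hne_top hne_bot
        have hmemS : ((ENNReal.ofReal b : ENNReal) : EReal) *
            (OCE μ X v (ENNReal.ofReal b) - (t : ℝ)) ∈ {y : EReal | ∃ β : ENNReal, 0 < β ∧
            β ≤ slopeSup v ∧ y = (β : EReal) * (OCE μ X v β - (t : ℝ))} :=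
          ⟨ENNReal.ofReal b, hβpos, hβle, rfl⟩
        refine le_trans ?_ (le_sSup hmemS)
        have hco : ((ENNReal.ofReal b : ENNReal) : EReal) = ((b : ℝ) : EReal) := by
          rw [EReal.coe_ennreal_ofReal, max_eq_left hb0.le]
        rw [hco, ← hr, ← EReal.coe_sub, ← EReal.coe_mul, EReal.coe_le_coe_iff]
        have hrlow : s1 + b⁻¹ * g t ≤ r := by
          rw [← hr, EReal.coe_le_coe_iff] at hlow
          exact hlow
        have h5 := mul_le_mul_of_nonneg_left hrlow hb0.le
        have h6 : b * (s1 + b⁻¹ * g t) = b * s1 + g t := by field_simp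
        nlinarith
      set d := min c 1 with hd
      have hd0 : 0 < d := lt_min hcpos one_pos
      have hseq : ∀ n : ℕ, ((d / (n + 1) * (s1 - t) + g t : ℝ) : EReal) ≤
          sSup {y : EReal | ∃ β : ENNReal, 0 < β ∧
            β ≤ slopeSup v ∧ y = (β : EReal) * (OCE μ X v β - (t : ℝ))} := by
        intro n
        have hb0 : (0:ℝ) < d / (n + 1) := by positivity
        have hle : d / (n + 1) ≤ d :=
          div_le_self hd0.le (le_add_of_nonneg_left (Nat.cast_nonneg n))
        exact hmain _ hb0 (hle.trans (min_le_left _ _)) (hle.trans (min_le_right _ _))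
      have hlim : Tendsto (fun n : ℕ => (d / (n + 1) * (s1 - t) + g t : ℝ))
          atTop (nhds (g t)) := by
        have h1 : Tendsto (fun n : ℕ => (1:ℝ) / (n + 1)) atTop (nhds 0) :=
          tendsto_one_div_add_atTop_nhds_zero_nat
        have h2 := ((h1.const_mul d).mul_const (s1 - t)).add_const (g t)
        have he : (fun n : ℕ => d * ((1:ℝ) / (n + 1)) * (s1 - t) + g t)
            = fun n : ℕ => d / (n + 1) * (s1 - t) + g t := by
          funext n; ring
        rw [he] at h2
        simpa using h2
      have hlimE : Tendsto (fun n : ℕ => ((d / (n + 1) * (s1 - t) + g t : ℝ) : EReal))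
          atTop (nhds ((g t : ℝ) : EReal)) :=
        (continuous_coe_real_ereal.tendsto _).comp hlim
      exact le_of_tendsto' hlimE hseq
  · -- Part A : sSup ≤ g t
    refine sSup_le ?_
    rintro y ⟨β, hβ0, hβle, rfl⟩
    by_cases hβtop : β = ⊤
    · subst hβtop
      have hOCEbot : OCE μ X v ⊤ = ⊥ := by
        rw [EReal.eq_bot_iff_forall_lt]
        intro r
        have h1 : OCE μ X v ⊤ ≤
            (((r - 1) + ((⊤ : ENNReal)⁻¹).toReal * ∫ ω, v (X ω - (r - 1)) ∂μ : ℝ) : EReal) := by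
          unfold OCE
          exact sInf_le ⟨r - 1, rfl⟩
        refine lt_of_le_of_lt h1 ?_
        rw [show ((r - 1) + ((⊤ : ENNReal)⁻¹).toReal * ∫ ω, v (X ω - (r - 1)) ∂μ : ℝ)
          = r - 1 by simp]
        exact EReal.coe_lt_coe_iff.2 (sub_one_lt r)
      rw [hOCEbot, EReal.bot_sub, EReal.coe_ennreal_top,
        EReal.top_mul_of_neg EReal.bot_lt_zero]
      exact bot_le
    · set b := β.toReal with hb
      have hbpos : 0 < b := ENNReal.toReal_pos hβ0.ne' hβtop
      have h1 : (β : EReal) ≠ ⊤ := by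
        simpa [EReal.coe_ennreal_eq_top_iff] using hβtop
      have h2 : (β : EReal) ≠ ⊥ := EReal.coe_ennreal_ne_bot β
      have hβcoe : (β : EReal) = ((b : ℝ) : EReal) := by
        conv_lhs => rw [← EReal.coe_toReal h1 h2]
        rw [EReal.toReal_coe_ennreal]
      have hinv : (β⁻¹).toReal = b⁻¹ := by rw [ENNReal.toReal_inv]
      have hmem : OCE μ X v β ≤ ((t + b⁻¹ * g t : ℝ) : EReal) := by
        unfold OCE
        refine sInf_le ⟨t, ?_⟩
        rw [hinv, hgdef t]
      rcases eq_or_ne (OCE μ X v β) ⊥ with hO | hO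
      · rw [hO, EReal.bot_sub, hβcoe, EReal.coe_mul_bot_of_pos hbpos]
        exact bot_le
      · have hne_top : OCE μ X v β ≠ ⊤ := ne_top_of_le_ne_top (EReal.coe_ne_top _) hmem
        have hr : (((OCE μ X v β).toReal : ℝ) : EReal) = OCE μ X v β :=
          EReal.coe_toReal hne_top hO
        set r := (OCE μ X v β).toReal with hrdef
        have hrle : r ≤ t + b⁻¹ * g t := by
          rw [← hr, EReal.coe_le_coe_iff] at hmem
          exact hmem
        rw [← hr, hβcoe, ← EReal.coe_sub, ← EReal.coe_mul, EReal.coe_le_coe_iff]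
        have h5 : b * (r - t) ≤ b * (b⁻¹ * g t) :=
          mul_le_mul_of_nonneg_left (by linarith) hbpos.le
        rw [← mul_assoc, mul_inv_cancel₀ hbpos.ne', one_mul] at h5
        exact h5
end
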